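/- arXiv:1611.09002 — 5 statements merged into one kernel-verified Lean document; each statement's English description precedes it below -/
import Mathlib

section
/- Every multigraph G with maximum degree Δ and maximum edge multiplicity μ admits a proper edge-colouring using at most Δ + μ colours. -/
open Finset

/-- A multigraph on vertex type `V` with edge type `E`: each edge has an
unordered pair of distinct endpoints (loopless). -/
structure Multigraph (V : Type) (E : Type) where
  ends : E → Sym2 V
  loopless : ∀ e, ¬ (ends e).IsDiag

namespace Multigraph

variable {V E : Type} [Fintype V] [Fintype E] [DecidableEq V] [DecidableEq E]

/-- The degree of a vertex: the number of edges incident to it. -/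
noncomputable def degree (G : Multigraph V E) (v : V) : ℕ :=
  {e : E | v ∈ G.ends e}.ncard

/-- The multiplicity of an unordered pair of vertices. -/
noncomputable def multiplicity (G : Multigraph V E) (s : Sym2 V) : ℕ :=
  {e : E | G.ends e = s}.ncard

/-- Two distinct edges are adjacent when they share an endpoint. -/
def EdgeAdj (G : Multigraph V E) (e f : E) : Prop :=
  e ≠ f ∧ ∃ v, v ∈ G.ends e ∧ v ∈ G.ends f

/-- A matching: a set of pairwise non-adjacent edges. -/
def IsMatching (G : Multigraph V E) (M : Finset E) : Prop :=
  ∀ e ∈ M, ∀ f ∈ M, e ≠ f → ¬ G.EdgeAdj e f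

/-- A maximal matching. -/
def IsMaximalMatching (G : Multigraph V E) (M : Finset E) : Prop :=
  G.IsMatching M ∧ ∀ f ∉ M, ∃ e ∈ M, G.EdgeAdj e f

/-- `c` is a proper edge-colouring of `G` minus the edge set `D`, using
colours from `{1, …, k}`. -/
def IsProperOff (G : Multigraph V E) (D : Finset E) (k : ℕ) (c : E → ℕ) : Prop :=
  (∀ e, e ∉ D → c e ∈ Finset.Icc 1 k) ∧
    ∀ e f, e ∉ D → f ∉ D → G.EdgeAdj e f → c e ≠ c f

/-- The underlying simple graph of a multigraph. -/
def toSimple (G : Multigraph V E) : SimpleGraph V where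
  Adj u v := u ≠ v ∧ ∃ e, G.ends e = s(u, v)
  symm := ⟨by
    rintro u v ⟨h, e, he⟩
    exact ⟨h.symm, e, he.trans Sym2.eq_swap⟩⟩
  loopless := ⟨fun v h => h.1 rfl⟩

/-- The distance between edges `e` and `f` is at least `d`: every path in the
underlying graph between an endpoint of `e` and an endpoint of `f` has length
at least `d`. -/
def EdgeDistGe (G : Multigraph V E) (e f : E) (d : ℕ) : Prop :=
  ∀ u v, u ∈ G.ends e → v ∈ G.ends f → ∀ p : G.toSimple.Walk u v, d ≤ p.length

/-- The distance between edges `e` and `f` is at most `d`. -/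
def EdgeDistLe (G : Multigraph V E) (e f : E) (d : ℕ) : Prop :=
  ∃ u v, u ∈ G.ends e ∧ v ∈ G.ends f ∧ ∃ p : G.toSimple.Walk u v, p.length ≤ d

/-- `G` contains no cycle of length 5. -/
def C5Free (G : Multigraph V E) : Prop :=
  ¬ ∃ (v : Fin 5 → V) (f : Fin 5 → E), Function.Injective v ∧ Function.Injective f ∧
      ∀ i : Fin 5, G.ends (f i) = s(v i, v (i + 1))

end Multigraph

/-!
Colour the edges one at a time. To colour an uncoloured edge `e₀ = x y₀` from a proper
partial colouring with `Δ + μ` colours, take a maximal fan at `x`: distinct edges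
`f i = x (y i)` with `f 0 = e₀`, the colour of each later `f i` being free at some earlier
`y j`. A colour free at `x` and at some `y t` would let us shift colours down the fan and
colour `e₀`. So, if `e₀` cannot be coloured, the free colours at distinct fan vertices are
disjoint: a colour `α` free at two of them and a colour `β` free at `x` give an `α/β` Kempe
chain which misses `x` or one of them, and swapping it creates a colour free at `x` and at a
fan vertex. Every vertex has at least `μ` free colours, `y₀` at least `μ + 1`, so the fan
vertices `Z` have more than `μ |Z|` free colours. None of them is free at `x`, so each is the
colour of an edge at `x`, which by maximality is a fan edge other than `e₀`; but the fan has at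
most `μ |Z|` edges.
-/

namespace SimpleGraph

variable {W : Type*} [Fintype W] {H : SimpleGraph W} [DecidableRel H.Adj]

theorem Connected.card_filter_degree_le_one_le_two (hH : H.Connected)
    (hdeg : ∀ v, H.degree v ≤ 2) : #{v | H.degree v ≤ 1} ≤ 2 := by
  have hsum : 2 * #H.edgeFinset + #{v | H.degree v ≤ 1} ≤ 2 * Fintype.card W := by
    have hle : ∀ v, H.degree v + (if H.degree v ≤ 1 then 1 else 0) ≤ 2 := fun v => by
      have := hdeg v
      split_ifs <;> omega
    have := sum_le_sum (s := univ) fun v _ => hle v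
    rw [sum_add_distrib, ← card_filter, sum_degrees_eq_twice_card_edges, sum_const, card_univ,
      smul_eq_mul] at this
    linarith
  have hvert : Fintype.card W ≤ #H.edgeFinset + 1 := by
    have := hH.card_vert_le_card_edgeSet_add_one
    rwa [Nat.card_eq_fintype_card, Nat.card_eq_fintype_card, card_edgeSet] at this
  omega

theorem Reachable.not_reachable_of_degree_le_one (hdeg : ∀ v, H.degree v ≤ 2)
    {x z z' : W} (hxz : x ≠ z) (hxz' : x ≠ z') (hzz' : z ≠ z') (hx : H.degree x ≤ 1)
    (hz : H.degree z ≤ 1) (hz' : H.degree z' ≤ 1) (hreach : H.Reachable x z) :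
    ¬ H.Reachable x z' := by
  classical
  intro hreach'
  let C := (H.connectedComponentMk x).supp
  have hdegC (v : C) : (H.induce C).degree v = H.degree v :=
    degree_induce_of_neighborSet_subset fun _ hw =>
      ConnectedComponent.mem_supp_of_adj_mem_supp _ v.2 hw
  have hconn : (H.induce C).Connected := (H.connectedComponentMk x).connected_toSimpleGraph
  have hC := hconn.card_filter_degree_le_one_le_two fun v => (hdegC v).trans_le (hdeg v)
  let leaves : Finset C := {⟨x, rfl⟩, ⟨z, (ConnectedComponent.sound hreach).symm⟩,
    ⟨z', (ConnectedComponent.sound hreach').symm⟩}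
  have hsub : leaves ⊆ ({v | (H.induce C).degree v ≤ 1} : Finset C) := by
    intro v hv
    rw [mem_filter, hdegC]
    simp only [leaves, mem_insert, mem_singleton] at hv
    rcases hv with rfl | rfl | rfl <;> exact ⟨mem_univ _, ‹_›⟩
  have hleaves : #leaves = 3 := by
    rw [card_insert_of_notMem, card_pair] <;> simp [Subtype.ext_iff, hxz, hxz', hzz']
  have := card_le_card hsub
  omega

end SimpleGraph

namespace Multigraph

variable {V E : Type} {G : Multigraph V E} {D : Finset E} {k : ℕ} {c : E → ℕ}
  {u v w x y₀ : V} {e₀ g h : E} {f : ℕ → E} {y : ℕ → V} {n m i j t α β γ δ μ : ℕ}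

theorem ne_of_ends_eq (hg : G.ends g = s(u, v)) : u ≠ v := by
  rintro rfl
  exact G.loopless g (hg ▸ Sym2.mk_isDiag_iff.mpr rfl)

theorem IsProperOff.eq_of_mem_ends (hc : G.IsProperOff D k c) (hg : g ∉ D) (hh : h ∉ D)
    (hvg : v ∈ G.ends g) (hvh : v ∈ G.ends h) (hgh : c g = c h) : g = h := by
  by_contra hne
  exact hc.2 g h hg hh ⟨hne, v, hvg, hvh⟩ hgh

section

variable [Fintype E] [DecidableEq V]

def incidenceFinset (G : Multigraph V E) (v : V) : Finset E := {g | v ∈ G.ends g}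

theorem card_incidenceFinset (G : Multigraph V E) (v : V) :
    #(G.incidenceFinset v) = G.degree v := by
  rw [degree, Set.ncard_eq_toFinset_card', incidenceFinset, Set.toFinset_ofPred]

theorem card_filter_ends_eq (G : Multigraph V E) (s : Sym2 V) :
    #{g | G.ends g = s} = G.multiplicity s := by
  rw [multiplicity, Set.ncard_eq_toFinset_card', Set.toFinset_ofPred]

variable [DecidableEq E]

def usedColours (G : Multigraph V E) (D : Finset E) (c : E → ℕ) (v : V) : Finset ℕ :=
  (G.incidenceFinset v \ D).image c

def freeColours (G : Multigraph V E) (D : Finset E) (k : ℕ) (c : E → ℕ) (v : V) : Finset ℕ :=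
  Icc 1 k \ G.usedColours D c v

theorem mem_usedColours : γ ∈ G.usedColours D c v ↔ ∃ g ∉ D, v ∈ G.ends g ∧ c g = γ := by
  simp only [usedColours, incidenceFinset, mem_image, mem_sdiff, mem_filter, mem_univ, true_and]
  exact ⟨fun ⟨g, ⟨hv, hg⟩, hc⟩ => ⟨g, hg, hv, hc⟩, fun ⟨g, hg, hv, hc⟩ => ⟨g, ⟨hv, hg⟩, hc⟩⟩

theorem mem_usedColours_of_mem_ends (hg : g ∉ D) (hv : v ∈ G.ends g) :
    c g ∈ G.usedColours D c v :=
  mem_usedColours.mpr ⟨g, hg, hv, rfl⟩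

theorem mem_freeColours :
    γ ∈ G.freeColours D k c v ↔ γ ∈ Icc 1 k ∧ γ ∉ G.usedColours D c v :=
  mem_sdiff

theorem ne_of_mem_freeColours (hγ : γ ∈ G.freeColours D k c v) (hg : g ∉ D)
    (hv : v ∈ G.ends g) : c g ≠ γ := by
  rintro rfl
  exact (mem_freeColours.mp hγ).2 (mem_usedColours_of_mem_ends hg hv)

theorem le_card_freeColours {Δ μ : ℕ} (hΔ : G.degree v ≤ Δ) :
    μ + #(G.incidenceFinset v ∩ D) ≤ #(G.freeColours D (Δ + μ) c v) := by
  have hIcc : Δ + μ ≤ #(G.freeColours D (Δ + μ) c v) + #(G.usedColours D c v) := by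
    simpa [freeColours] using
      card_le_card_sdiff_add_card (s := Icc 1 (Δ + μ)) (t := G.usedColours D c v)
  have hused : #(G.usedColours D c v) ≤ #(G.incidenceFinset v \ D) := card_image_le
  have hsplit := card_sdiff_add_card_inter (G.incidenceFinset v) D
  rw [card_incidenceFinset] at hsplit
  omega

theorem usedColours_update_subset :
    G.usedColours D (Function.update c g γ) v ⊆ insert γ (G.usedColours D c v) := by
  intro δ hδ
  obtain ⟨h, hh, hv, rfl⟩ := mem_usedColours.mp hδ
  rcases eq_or_ne h g with rfl | hne
  · simp
  · rw [Function.update_of_ne hne]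
    exact mem_insert_of_mem (mem_usedColours_of_mem_ends hh hv)

theorem mem_freeColours_update_of_ne (hδ : δ ∈ G.freeColours D k c v) (hne : δ ≠ γ) :
    δ ∈ G.freeColours D k (Function.update c g γ) v := by
  rw [mem_freeColours] at hδ ⊢
  exact ⟨hδ.1, fun h => (mem_insert.mp (usedColours_update_subset h)).elim hne hδ.2⟩

theorem freeColours_update_of_notMem_ends (hv : v ∉ G.ends g) :
    G.freeColours D k (Function.update c g γ) v = G.freeColours D k c v := by
  have : G.usedColours D (Function.update c g γ) v = G.usedColours D c v :=
    image_congr fun h hh => Function.update_of_ne (fun hg : h = g => hv <| by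
      simpa [incidenceFinset, hg] using (mem_sdiff.mp hh).1) _ _
  rw [freeColours, freeColours, this]

namespace IsProperOff

theorem update (hc : G.IsProperOff D k c) (hg : G.ends g = s(u, v))
    (hu : γ ∈ G.freeColours D k c u) (hv : γ ∈ G.freeColours D k c v) :
    G.IsProperOff (D.erase g) k (Function.update c g γ) := by
  have hD : ∀ h, h ∉ D.erase g → h ≠ g → h ∉ D := fun h hh hne hD =>
    hh (mem_erase.mpr ⟨hne, hD⟩)
  have hfree : ∀ h, h ∉ D.erase g → h ≠ g → (∃ w, w ∈ G.ends g ∧ w ∈ G.ends h) → c h ≠ γ := by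
    rintro h hh hne ⟨w, hwg, hwh⟩
    rw [hg, Sym2.mem_iff] at hwg
    rcases hwg with rfl | rfl
    · exact ne_of_mem_freeColours hu (hD h hh hne) hwh
    · exact ne_of_mem_freeColours hv (hD h hh hne) hwh
  constructor
  · intro h hh
    rcases eq_or_ne h g with rfl | hne
    · simpa using (mem_freeColours.mp hu).1
    · simpa [hne] using hc.1 h (hD h hh hne)
  · rintro h h' hh hh' hadj
    rcases eq_or_ne h g with rfl | hne
    · have hne' : h' ≠ h := hadj.1.symm
      simpa [Function.update_of_ne hne'] using (hfree h' hh' hne' hadj.2).symm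
    · rcases eq_or_ne h' g with rfl | hne'
      · simpa [Function.update_of_ne hne] using
          hfree h hh hne (hadj.2.imp fun _ hw => hw.symm)
      · simpa [Function.update_of_ne hne, Function.update_of_ne hne'] using
          hc.2 h h' (hD h hh hne) (hD h' hh' hne') hadj

theorem mem_freeColours_update_self (hc : G.IsProperOff D k c) (hg : g ∉ D)
    (hv : v ∈ G.ends g) (hγ : γ ≠ c g) :
    c g ∈ G.freeColours D k (Function.update c g γ) v := by
  refine mem_freeColours.mpr ⟨hc.1 g hg, fun hused => ?_⟩
  obtain ⟨h, hh, hvh, hcol⟩ := mem_usedColours.mp hused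
  rcases eq_or_ne h g with rfl | hne
  · simp [hγ] at hcol
  · rw [Function.update_of_ne hne] at hcol
    exact hne (hc.eq_of_mem_ends hh hg hvh hv hcol)

end IsProperOff

end

/-- Parallel `α/β`-edges are merged, which is harmless: only reachability and upper bounds on
degrees are used. -/
def kempeGraph (G : Multigraph V E) (D : Finset E) (c : E → ℕ) (α β : ℕ) : SimpleGraph V :=
  SimpleGraph.fromEdgeSet {s | ∃ g ∉ D, (c g = α ∨ c g = β) ∧ G.ends g = s}

theorem kempeGraph_adj_of_ends_eq (hg : g ∉ D) (hcol : c g = α ∨ c g = β)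
    (hends : G.ends g = s(u, v)) : (G.kempeGraph D c α β).Adj u v :=
  (SimpleGraph.fromEdgeSet_adj _).mpr ⟨⟨g, hg, hcol, hends⟩, ne_of_ends_eq hends⟩

open Classical in
/-- Recolouring every edge that meets the component of `w` by the transposition changes only
the `α/β`-edges of that Kempe chain. -/
noncomputable def kempeSwap (G : Multigraph V E) (D : Finset E) (c : E → ℕ) (α β : ℕ) (w : V)
    (g : E) : ℕ :=
  if ∃ u ∈ G.ends g, (G.kempeGraph D c α β).Reachable w u then Equiv.swap α β (c g) else c g

theorem kempeSwap_of_reachable (hv : v ∈ G.ends g) (hw : (G.kempeGraph D c α β).Reachable w v) :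
    G.kempeSwap D c α β w g = Equiv.swap α β (c g) := by
  classical
  exact if_pos ⟨v, hv, hw⟩

theorem kempeSwap_of_not_reachable (hg : g ∉ D) (hv : v ∈ G.ends g)
    (hw : ¬ (G.kempeGraph D c α β).Reachable w v) : G.kempeSwap D c α β w g = c g := by
  classical
  rw [kempeSwap, ite_eq_right_iff]
  rintro ⟨u, hu, hwu⟩
  obtain ⟨v', hends⟩ := Sym2.mem_iff_exists.mp hv
  have hu' : u = v' := by
    rw [hends, Sym2.mem_iff] at hu
    exact hu.resolve_left fun huv => hw (huv ▸ hwu)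
  subst hu'
  refine Equiv.swap_apply_of_ne_of_ne ?_ ?_ <;> intro hcol
  · exact hw (hwu.trans (kempeGraph_adj_of_ends_eq hg (.inl hcol) hends).symm.reachable)
  · exact hw (hwu.trans (kempeGraph_adj_of_ends_eq hg (.inr hcol) hends).symm.reachable)

theorem IsProperOff.kempeSwap (hc : G.IsProperOff D k c) (hα : α ∈ Icc 1 k)
    (hβ : β ∈ Icc 1 k) : G.IsProperOff D k (G.kempeSwap D c α β w) := by
  classical
  constructor
  · intro g hg
    rw [Multigraph.kempeSwap]
    split_ifs
    · rw [Equiv.swap_apply_def]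
      split_ifs
      exacts [hβ, hα, hc.1 g hg]
    · exact hc.1 g hg
  · rintro g h hg hh hadj
    obtain ⟨v, hvg, hvh⟩ := hadj.2
    by_cases hw : (G.kempeGraph D c α β).Reachable w v
    · rw [kempeSwap_of_reachable hvg hw, kempeSwap_of_reachable hvh hw]
      exact (Equiv.injective _).ne (hc.2 g h hg hh hadj)
    · rw [kempeSwap_of_not_reachable hg hvg hw, kempeSwap_of_not_reachable hh hvh hw]
      exact hc.2 g h hg hh hadj

section

variable [Fintype E] [DecidableEq V] [DecidableEq E]

theorem mem_freeColours_kempeSwap_of_reachable (hα : α ∈ Icc 1 k) (hβ : β ∈ Icc 1 k)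
    (hw : (G.kempeGraph D c α β).Reachable w v) :
    γ ∈ G.freeColours D k (G.kempeSwap D c α β w) v ↔
      Equiv.swap α β γ ∈ G.freeColours D k c v := by
  have hIcc : γ ∈ Icc 1 k ↔ Equiv.swap α β γ ∈ Icc 1 k := by
    rw [Equiv.swap_apply_def]
    split_ifs <;> subst_vars <;> simp only [hα, hβ]
  have hused : (∃ g ∉ D, v ∈ G.ends g ∧ G.kempeSwap D c α β w g = γ) ↔
      ∃ g ∉ D, v ∈ G.ends g ∧ c g = Equiv.swap α β γ :=
    exists_congr fun g => and_congr_right fun _ => and_congr_right fun hvg => by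
      rw [kempeSwap_of_reachable hvg hw, Equiv.swap_apply_eq_iff]
  rw [mem_freeColours, mem_freeColours, mem_usedColours, mem_usedColours, hIcc, hused]

theorem freeColours_kempeSwap_of_not_reachable (hw : ¬ (G.kempeGraph D c α β).Reachable w v) :
    G.freeColours D k (G.kempeSwap D c α β w) v = G.freeColours D k c v := by
  have : G.usedColours D (G.kempeSwap D c α β w) v = G.usedColours D c v :=
    image_congr fun g hg => by
      obtain ⟨hvg, hgD⟩ := mem_sdiff.mp hg
      exact kempeSwap_of_not_reachable hgD (by simpa [incidenceFinset] using hvg) hw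
  rw [freeColours, freeColours, this]

open Classical in
theorem degree_kempeGraph_le [Fintype V] (hc : G.IsProperOff D k c) (v : V) :
    (G.kempeGraph D c α β).degree v ≤ #({α, β} ∩ G.usedColours D c v) := by
  rw [← SimpleGraph.card_neighborFinset_eq_degree]
  refine card_le_card_of_forall_subsingleton
    (fun u γ => ∃ g ∉ D, c g = γ ∧ G.ends g = s(v, u)) (fun u hu => ?_) ?_
  · rw [SimpleGraph.mem_neighborFinset, kempeGraph, SimpleGraph.fromEdgeSet_adj] at hu
    obtain ⟨⟨g, hg, hcol, hends⟩, -⟩ := hu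
    refine ⟨c g, mem_inter.mpr ⟨?_, mem_usedColours_of_mem_ends hg ?_⟩, g, hg, rfl, hends⟩
    · rcases hcol with h | h <;> simp [h]
    · exact hends ▸ Sym2.mem_mk_left v u
  · rintro γ - u₁ ⟨-, g₁, hg₁, hc₁, he₁⟩ u₂ ⟨-, g₂, hg₂, hc₂, he₂⟩
    obtain rfl := hc.eq_of_mem_ends hg₁ hg₂ (he₁ ▸ Sym2.mem_mk_left v u₁)
      (he₂ ▸ Sym2.mem_mk_left v u₂) (hc₁.trans hc₂.symm)
    exact Sym2.congr_right.mp (he₁.symm.trans he₂)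

open Classical in
theorem degree_kempeGraph_le_two [Fintype V] (hc : G.IsProperOff D k c) (v : V) :
    (G.kempeGraph D c α β).degree v ≤ 2 :=
  (degree_kempeGraph_le hc v).trans ((card_le_card inter_subset_left).trans card_le_two)

open Classical in
theorem degree_kempeGraph_le_one [Fintype V] (hc : G.IsProperOff D k c)
    (h : α ∉ G.usedColours D c v ∨ β ∉ G.usedColours D c v) :
    (G.kempeGraph D c α β).degree v ≤ 1 := by
  refine (degree_kempeGraph_le hc v).trans (card_le_one.mpr fun a ha b hb => ?_)
  simp only [mem_inter, mem_insert, mem_singleton] at ha hb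
  rcases ha with ⟨rfl | rfl, ha⟩ <;> rcases hb with ⟨rfl | rfl, hb⟩ <;> tauto

structure IsFan (G : Multigraph V E) (D : Finset E) (k : ℕ) (c : E → ℕ) (x : V) (e₀ : E)
    (f : ℕ → E) (y : ℕ → V) (n : ℕ) : Prop where
  apply_zero : f 0 = e₀
  ends_eq : ∀ i < n, G.ends (f i) = s(x, y i)
  injOn : Set.InjOn f (Set.Iio n)
  notMem : ∀ i, 0 < i → i < n → f i ∉ D
  exists_mem_freeColours : ∀ i, 0 < i → i < n → ∃ j < i, c (f i) ∈ G.freeColours D k c (y j)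

namespace IsFan

theorem mem_ends_left (hfan : G.IsFan D k c x e₀ f y n) (hi : i < n) : x ∈ G.ends (f i) :=
  hfan.ends_eq i hi ▸ Sym2.mem_mk_left x (y i)

theorem mem_ends_right (hfan : G.IsFan D k c x e₀ f y n) (hi : i < n) : y i ∈ G.ends (f i) :=
  hfan.ends_eq i hi ▸ Sym2.mem_mk_right x (y i)

theorem ne_centre (hfan : G.IsFan D k c x e₀ f y n) (hi : i < n) : y i ≠ x :=
  (ne_of_ends_eq (hfan.ends_eq i hi)).symm

theorem mono (hfan : G.IsFan D k c x e₀ f y n) (hm : m ≤ n) : G.IsFan D k c x e₀ f y m where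
  apply_zero := hfan.apply_zero
  ends_eq i hi := hfan.ends_eq i (hi.trans_le hm)
  injOn := hfan.injOn.mono (Set.Iio_subset_Iio hm)
  notMem i h₀ hi := hfan.notMem i h₀ (hi.trans_le hm)
  exists_mem_freeColours i h₀ hi := hfan.exists_mem_freeColours i h₀ (hi.trans_le hm)

theorem snoc (hfan : G.IsFan D k c x e₀ f y n) (hj : j < n) (hg : G.ends g = s(x, w))
    (hgD : g ∉ D) (hgf : ∀ i < n, f i ≠ g) (hcol : c g ∈ G.freeColours D k c (y j)) :
    G.IsFan D k c x e₀ (Function.update f n g) (Function.update y n w) (n + 1) := by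
  have hlt : ∀ {i}, i < n + 1 → i ≠ n → i < n := fun hi hin => by omega
  refine ⟨?_, fun i hi => ?_, fun a ha b hb hab => ?_, fun i h₀ hi => ?_, fun i h₀ hi => ?_⟩
  · rw [Function.update_of_ne (by omega), hfan.apply_zero]
  · rcases eq_or_ne i n with rfl | hin
    · simpa using hg
    · simpa [hin] using hfan.ends_eq i (hlt hi hin)
  · simp only [Set.mem_Iio] at ha hb
    rcases eq_or_ne a n with rfl | han <;> rcases eq_or_ne b a with rfl | hba
    · rfl
    · rw [Function.update_self, Function.update_of_ne hba] at hab
      exact (hgf b (hlt hb hba) hab.symm).elim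
    · rfl
    · rcases eq_or_ne b n with rfl | hbn
      · rw [Function.update_self, Function.update_of_ne han] at hab
        exact (hgf a (hlt ha han) hab).elim
      · rw [Function.update_of_ne han, Function.update_of_ne hbn] at hab
        exact hfan.injOn (hlt ha han) (hlt hb hbn) hab
  · rcases eq_or_ne i n with rfl | hin
    · simpa using hgD
    · simpa [hin] using hfan.notMem i h₀ (hlt hi hin)
  · rcases eq_or_ne i n with rfl | hin
    · exact ⟨j, hj, by simpa [hj.ne] using hcol⟩
    · obtain ⟨j', hj', hcol'⟩ := hfan.exists_mem_freeColours i h₀ (hlt hi hin)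
      exact ⟨j', hj', by simpa [hin, (hj'.trans (hlt hi hin)).ne] using hcol'⟩

theorem le_card (hfan : G.IsFan D k c x e₀ f y n) : n ≤ Fintype.card E := by
  simpa using card_le_card_of_injOn f (fun _ _ => mem_univ _)
    (by simpa [Set.InjOn] using hfan.injOn : Set.InjOn f (range n : Set ℕ))

theorem exists_isProperOff_erase (hc : G.IsProperOff D k c) (hfan : G.IsFan D k c x e₀ f y n)
    (ht : t < n) (hγx : γ ∈ G.freeColours D k c x)
    (hγt : γ ∈ G.freeColours D k c (y t)) : ∃ c', G.IsProperOff (D.erase e₀) k c' := by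
  induction t using Nat.strong_induction_on generalizing c n γ with
  | _ t ih =>
  rcases Nat.eq_zero_or_pos t with rfl | ht₀
  · exact ⟨_, hfan.apply_zero ▸ hc.update (hfan.ends_eq 0 ht) hγx hγt⟩
  obtain ⟨j, hjt, hαj⟩ := hfan.exists_mem_freeColours t ht₀ ht
  have hfD := hfan.notMem t ht₀ ht
  have hne : ∀ s, 0 < s → s < n → c (f s) ≠ γ := fun s h₀ hs =>
    ne_of_mem_freeColours hγx (hfan.notMem s h₀ hs) (hfan.mem_ends_left hs)
  have hc' : G.IsProperOff D k (Function.update c (f t) γ) := by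
    simpa [erase_eq_of_notMem hfD] using hc.update (hfan.ends_eq t ht) hγx hγt
  have hfan' : G.IsFan D k (Function.update c (f t) γ) x e₀ f y t := by
    refine { hfan.mono ht.le with exists_mem_freeColours := fun s h₀ hs => ?_ }
    obtain ⟨j', hj', hcol⟩ := hfan.exists_mem_freeColours s h₀ (hs.trans ht)
    rw [Function.update_of_ne (hfan.injOn.ne (hs.trans ht : s < n) (ht : t < n) hs.ne)]
    exact ⟨j', hj', mem_freeColours_update_of_ne hcol (hne s h₀ (hs.trans ht))⟩
  have hyj : y j ∉ G.ends (f t) := by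
    rw [hfan.ends_eq t ht, Sym2.mem_iff, not_or]
    refine ⟨hfan.ne_centre (hjt.trans ht), fun hyy => ?_⟩
    exact ne_of_mem_freeColours hαj hfD (hyy ▸ hfan.mem_ends_right ht) rfl
  refine ih j hjt (γ := c (f t)) hc' hfan' hjt ?_ ?_
  · exact hc.mem_freeColours_update_self hfD (hfan.mem_ends_left ht) (hne t ht₀ ht).symm
  · rwa [freeColours_update_of_notMem_ends hyj]

theorem disjoint_freeColours_centre (hc : G.IsProperOff D k c)
    (hno : ∀ c', ¬ G.IsProperOff (D.erase e₀) k c') (hfan : G.IsFan D k c x e₀ f y n)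
    (hi : i < n) : Disjoint (G.freeColours D k c x) (G.freeColours D k c (y i)) :=
  disjoint_left.mpr fun _ hx hy => (hfan.exists_isProperOff_erase hc hi hx hy).elim hno

theorem kempeSwap (hfan : G.IsFan D k c x e₀ f y n) (hα : α ∈ Icc 1 k)
    (hβIcc : β ∈ Icc 1 k) (hβ : β ∈ G.freeColours D k c x)
    (hxw : ¬ (G.kempeGraph D c α β).Reachable w x)
    (hreach : ∀ j, j + 1 < n → α ∈ G.freeColours D k c (y j) →
      (G.kempeGraph D c α β).Reachable x (y j)) :
    G.IsFan D k (G.kempeSwap D c α β w) x e₀ f y n := by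
  refine { hfan with exists_mem_freeColours := fun s h₀ hs => ?_ }
  obtain ⟨j, hj, hcol⟩ := hfan.exists_mem_freeColours s h₀ hs
  refine ⟨j, hj, ?_⟩
  rw [kempeSwap_of_not_reachable (hfan.notMem s h₀ hs) (hfan.mem_ends_left hs) hxw]
  by_cases hw : (G.kempeGraph D c α β).Reachable w (y j)
  · have hα' : c (f s) ≠ α := fun hα' =>
      hxw (hw.trans (hreach j (by omega) (hα' ▸ hcol)).symm)
    have hβ' := ne_of_mem_freeColours hβ (hfan.notMem s h₀ hs) (hfan.mem_ends_left hs)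
    rwa [mem_freeColours_kempeSwap_of_reachable hα hβIcc hw,
      Equiv.swap_apply_of_ne_of_ne hα' hβ']
  · rwa [freeColours_kempeSwap_of_not_reachable hw]

theorem disjoint_freeColours [Fintype V] (hc : G.IsProperOff D k c)
    (hno : ∀ c', ¬ G.IsProperOff (D.erase e₀) k c') (hfan : G.IsFan D k c x e₀ f y n)
    (hβ : β ∈ G.freeColours D k c x) (hi : i < n) (hj : j < n) (hij : y i ≠ y j) :
    Disjoint (G.freeColours D k c (y i)) (G.freeColours D k c (y j)) := by
  classical
  refine disjoint_left.mpr fun α hαi hαj => ?_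
  have hαIcc := (mem_freeColours.mp hαi).1
  have hβIcc := (mem_freeColours.mp hβ).1
  let K := G.kempeGraph D c α β
  have hdeg (t) (ht : α ∈ G.freeColours D k c (y t)) : K.degree (y t) ≤ 1 :=
    degree_kempeGraph_le_one hc (.inl (mem_freeColours.mp ht).2)
  have hex : ∃ t, t < n ∧ α ∈ G.freeColours D k c (y t) ∧ ¬ K.Reachable x (y t) := by
    by_cases hreach : K.Reachable x (y i)
    · refine ⟨j, hj, hαj, hreach.not_reachable_of_degree_le_one (degree_kempeGraph_le_two hc)
        (hfan.ne_centre hi).symm (hfan.ne_centre hj).symm hij ?_ (hdeg i hαi) (hdeg j hαj)⟩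
      exact degree_kempeGraph_le_one hc (.inr (mem_freeColours.mp hβ).2)
    · exact ⟨i, hi, hαi, hreach⟩
  obtain ⟨ht₀, hαt₀, hxt₀⟩ := Nat.find_spec hex
  set t₀ := Nat.find hex
  have hxw : ¬ K.Reachable (y t₀) x := fun h => hxt₀ h.symm
  -- earlier fan vertices with `α` free lie in the chain of `x`, so the swap leaves them alone
  have hreach (j') (hj' : j' + 1 < t₀ + 1) (hαj' : α ∈ G.freeColours D k c (y j')) :
      K.Reachable x (y j') :=
    by_contra fun hr => Nat.find_min hex (show j' < t₀ by omega) ⟨by omega, hαj', hr⟩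
  have hfan' := (hfan.mono ht₀).kempeSwap hαIcc hβIcc hβ hxw hreach
  have hβx : β ∈ G.freeColours D k (G.kempeSwap D c α β (y t₀)) x := by
    rwa [freeColours_kempeSwap_of_not_reachable hxw]
  have hβw : β ∈ G.freeColours D k (G.kempeSwap D c α β (y t₀)) (y t₀) := by
    rwa [mem_freeColours_kempeSwap_of_reachable hαIcc hβIcc .rfl, Equiv.swap_apply_right]
  exact disjoint_left.mp (hfan'.disjoint_freeColours_centre (hc.kempeSwap hαIcc hβIcc) hno
    (lt_add_one t₀)) hβx hβw

theorem exists_eq_of_maximal (hfan : G.IsFan D k c x e₀ f y n)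
    (hmax : ∀ f' y', ¬ G.IsFan D k c x e₀ f' y' (n + 1)) (hj : j < n) (hg : g ∉ D)
    (hxg : x ∈ G.ends g) (hcol : c g ∈ G.freeColours D k c (y j)) : ∃ i < n, f i = g := by
  by_contra! hgf
  obtain ⟨w, hw⟩ := Sym2.mem_iff_exists.mp hxg
  exact hmax _ _ (hfan.snoc hj hw hg hgf hcol)

theorem biUnion_freeColours_subset (hc : G.IsProperOff D k c) (he₀ : e₀ ∈ D)
    (hno : ∀ c', ¬ G.IsProperOff (D.erase e₀) k c') (hfan : G.IsFan D k c x e₀ f y n)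
    (hmax : ∀ f' y', ¬ G.IsFan D k c x e₀ f' y' (n + 1)) :
    ((range n).image y).biUnion (G.freeColours D k c ·) ⊆ (Ioo 0 n).image (c ∘ f) := by
  intro γ hγ
  obtain ⟨z, hz, hγz⟩ := mem_biUnion.mp hγ
  obtain ⟨t, ht, rfl⟩ := mem_image.mp hz
  rw [mem_range] at ht
  have hγx : γ ∈ G.usedColours D c x := by
    by_contra h
    exact disjoint_left.mp (hfan.disjoint_freeColours_centre hc hno ht)
      (mem_freeColours.mpr ⟨(mem_freeColours.mp hγz).1, h⟩) hγz
  obtain ⟨g, hg, hxg, rfl⟩ := mem_usedColours.mp hγx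
  obtain ⟨i, hi, rfl⟩ := hfan.exists_eq_of_maximal hmax ht hg hxg hγz
  have hi₀ : 0 < i := Nat.pos_of_ne_zero fun h => hg (h ▸ hfan.apply_zero ▸ he₀)
  exact mem_image_of_mem _ (mem_Ioo.mpr ⟨hi₀, hi⟩)

theorem le_mul_card_image (hfan : G.IsFan D k c x e₀ f y n) (hμ : ∀ s, G.multiplicity s ≤ μ) :
    n ≤ μ * #((range n).image y) := by
  have hsub :
      (range n).image f ⊆ ((range n).image y).biUnion fun z => {g | G.ends g = s(x, z)} := by
    intro g hg
    obtain ⟨i, hi, rfl⟩ := mem_image.mp hg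
    rw [mem_range] at hi
    exact mem_biUnion.mpr
      ⟨y i, mem_image_of_mem y (mem_range.mpr hi), by simpa using hfan.ends_eq i hi⟩
  calc n = #((range n).image f) := by
        rw [card_image_of_injOn (by rw [coe_range]; exact hfan.injOn), card_range]
    _ ≤ ∑ z ∈ (range n).image y, #{g | G.ends g = s(x, z)} :=
        (card_le_card hsub).trans card_biUnion_le
    _ ≤ ∑ z ∈ (range n).image y, μ :=
        sum_le_sum fun z _ => (card_filter_ends_eq G _).trans_le (hμ _)
    _ = μ * #((range n).image y) := by rw [sum_const, smul_eq_mul, mul_comm]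

end IsFan

theorem exists_maximal_isFan (G : Multigraph V E) (D : Finset E) (k : ℕ) (c : E → ℕ)
    (hxy : G.ends e₀ = s(x, y₀)) :
    ∃ f y n, 0 < n ∧ G.IsFan D k c x e₀ f y n ∧ ∀ f' y', ¬ G.IsFan D k c x e₀ f' y' (n + 1) := by
  classical
  let P n := ∃ f y, G.IsFan D k c x e₀ f y n
  have hfan₁ : G.IsFan D k c x e₀ (fun _ => e₀) (fun _ => y₀) 1 :=
    ⟨rfl, fun _ _ => hxy, fun a ha b hb _ => by simp_all, by omega, by omega⟩
  have hP₁ : P 1 := ⟨_, _, hfan₁⟩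
  have hN : 1 ≤ Nat.findGreatest P (Fintype.card E) := Nat.le_findGreatest hfan₁.le_card hP₁
  obtain ⟨f, y, hfan⟩ := Nat.findGreatest_spec hfan₁.le_card hP₁
  exact ⟨f, y, _, hN, hfan, fun f' y' hfan' =>
    Nat.findGreatest_is_greatest (Nat.lt_succ_self _) hfan'.le_card ⟨f', y', hfan'⟩⟩

theorem IsProperOff.exists_isProperOff_erase [Fintype V] {Δ : ℕ} (hΔ : ∀ v, G.degree v ≤ Δ)
    (hμ : ∀ s, G.multiplicity s ≤ μ) (hc : G.IsProperOff D (Δ + μ) c) (he₀ : e₀ ∈ D) :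
    ∃ c', G.IsProperOff (D.erase e₀) (Δ + μ) c' := by
  by_contra! hno
  obtain ⟨y₀, hxy⟩ := Sym2.mem_iff_exists.mp (Sym2.out_fst_mem (G.ends e₀))
  obtain ⟨f, y, n, hn, hfan, hmax⟩ := exists_maximal_isFan G D (Δ + μ) c hxy
  have hend : ∀ z ∈ G.ends e₀, μ < #(G.freeColours D (Δ + μ) c z) := fun z hz =>
    (Nat.lt_add_of_pos_right (card_pos.mpr ⟨e₀, mem_inter.mpr
      ⟨by simpa [incidenceFinset] using hz, he₀⟩⟩)).trans_le (le_card_freeColours (hΔ z))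
  obtain ⟨β, hβ⟩ := card_pos.mp ((Nat.zero_le μ).trans_lt (hend _ (Sym2.out_fst_mem _)))
  have hdisj : ∀ z ∈ (range n).image y, ∀ z' ∈ (range n).image y, z ≠ z' →
      Disjoint (G.freeColours D (Δ + μ) c z) (G.freeColours D (Δ + μ) c z') := by
    simp only [mem_image, mem_range]
    rintro _ ⟨i, hi, rfl⟩ _ ⟨j, hj, rfl⟩ hij
    exact hfan.disjoint_freeColours hc hno hβ hi hj hij
  have hlower : μ * #((range n).image y) <
      #(((range n).image y).biUnion (G.freeColours D (Δ + μ) c ·)) := by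
    rw [card_biUnion hdisj, mul_comm, ← smul_eq_mul, ← sum_const]
    refine sum_lt_sum (fun z _ => (le_card_freeColours (hΔ z)).trans' (Nat.le_add_right _ _))
      ⟨y 0, mem_image_of_mem y (mem_range.mpr hn), hend _ ?_⟩
    exact hfan.apply_zero ▸ hfan.mem_ends_right hn
  have hupper := (card_le_card (hfan.biUnion_freeColours_subset hc he₀ hno hmax)).trans
    card_image_le
  have := hfan.le_mul_card_image hμ
  rw [Nat.card_Ioo] at hupper
  omega

theorem exists_isProperOff_compl [Fintype V] {Δ : ℕ} (hΔ : ∀ v, G.degree v ≤ Δ)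
    (hμ : ∀ s, G.multiplicity s ≤ μ) (S : Finset E) : ∃ c, G.IsProperOff Sᶜ (Δ + μ) c := by
  induction S using Finset.induction_on with
  | empty => exact ⟨fun _ => 1, by simp [IsProperOff]⟩
  | insert e S he ih =>
    obtain ⟨c, hc⟩ := ih
    rw [compl_insert]
    exact hc.exists_isProperOff_erase hΔ hμ (mem_compl.mpr he)

end

end Multigraph

theorem vizing_gupta_general {V E : Type} [Fintype V] [Fintype E]
    (G : Multigraph V E) (Δ μ : ℕ)
    (hΔ : ∀ v, G.degree v ≤ Δ) (hμ : ∀ s, G.multiplicity s ≤ μ) :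
    ∃ c : E → ℕ, (∀ e, c e ∈ Finset.Icc 1 (Δ + μ)) ∧
      ∀ e f, G.EdgeAdj e f → c e ≠ c f := by
  classical
  obtain ⟨c, hc⟩ := G.exists_isProperOff_compl hΔ hμ univ
  rw [compl_univ] at hc
  exact ⟨c, fun e => hc.1 e (notMem_empty e),
    fun e f => hc.2 e f (notMem_empty e) (notMem_empty f)⟩

/-- **Vizing–Gupta.** Every multigraph with maximum degree `Δ` and maximum edge
multiplicity `μ` has a proper edge-colouring with colours from `{1, …, Δ + μ}`. -/
theorem vizing_gupta {V E : Type} [Fintype V] [Fintype E] [DecidableEq V] [DecidableEq E]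
    (G : Multigraph V E) (Δ μ : ℕ)
    (hΔ : ∀ v, G.degree v ≤ Δ) (hμ : ∀ s, G.multiplicity s ≤ μ) :
    ∃ c : E → ℕ, (∀ e, c e ∈ Finset.Icc 1 (Δ + μ)) ∧
      ∀ e f, G.EdgeAdj e f → c e ≠ c f :=
  vizing_gupta_general G Δ μ hΔ hμ
end

section
/- Every simple graph G with maximum degree Δ admits a proper edge-colouring using at most Δ + 1 colours. -/
namespace SimpleGraph

variable {V : Type}

/-- Two distinct edges (as unordered pairs) share an endpoint. -/
def EdgeAdj (e f : Sym2 V) : Prop :=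
  e ≠ f ∧ ∃ v, v ∈ e ∧ v ∈ f

/-- The distance between edges `e` and `f` is at least `d`: every path between
an endpoint of `e` and an endpoint of `f` has length at least `d`. -/
def EdgeDistGe (G : SimpleGraph V) (e f : Sym2 V) (d : ℕ) : Prop :=
  ∀ u v, u ∈ e → v ∈ f → ∀ p : G.Walk u v, d ≤ p.length

/-- A matching of `G`: pairwise non-adjacent edges of `G`. -/
def IsMatchingSet (G : SimpleGraph V) (M : Set (Sym2 V)) : Prop :=
  M ⊆ G.edgeSet ∧ ∀ e ∈ M, ∀ f ∈ M, e ≠ f → ¬ EdgeAdj e f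

/-- A proper edge-colouring of `G` (off a deleted set `D`) with colours from
`{1, …, k}`. -/
def IsProperEC (G : SimpleGraph V) (D : Set (Sym2 V)) (k : ℕ) (c : Sym2 V → ℕ) : Prop :=
  (∀ e ∈ G.edgeSet, e ∉ D → c e ∈ Finset.Icc 1 k) ∧
    ∀ e ∈ G.edgeSet, ∀ f ∈ G.edgeSet, e ∉ D → f ∉ D → EdgeAdj e f → c e ≠ c f

end SimpleGraph

/-!
Colour the edges one at a time. To colour the edge `xy`, take a maximal fan `y = f 0, f 1, …, f n`
of neighbours of `x` in which the colour of `x f (j + 1)` is missing at `f j`; rotating the fan up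
to `f j` (giving `x f m` the colour of `x f (m + 1)` for `m < j`) moves the uncoloured edge to
`x f j`. Let `α` be missing at `x` and `β` at `f n`. If `β` is also missing at `x`, rotate the
whole fan and colour `x f n` with `β`. Otherwise, by maximality, `β` is the colour of an edge
`x f (i + 1)` with `i + 1 < n`, and `β` is missing at `f i` too. Swapping `α` and `β` on the Kempe
chain of `f n` after the full rotation, or on that of `f i` after rotating up to `f i`, makes `α`
missing at both ends of the uncoloured edge, unless that chain reaches `x`. If both chains reach
`x`, then `f n`, `f i` and `f (i + 1)` lie in one component of the `α`/`β`-subgraph of the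
original colouring with `x` removed; but that graph has maximum degree two and these three
vertices have degree at most one there.
-/

namespace SimpleGraph

theorem Connected.card_filter_degree_le_one_le_two_s2 {W : Type*} [Fintype W] {K : SimpleGraph W}
    [DecidableRel K.Adj] (hK : K.Connected) (hdeg : ∀ v, K.degree v ≤ 2) :
    (Finset.univ.filter fun v => K.degree v ≤ 1).card ≤ 2 := by
  have hE := hK.card_vert_le_card_edgeSet_add_one
  rw [Nat.card_eq_fintype_card, Nat.card_eq_fintype_card, ← edgeFinset_card] at hE
  have hsum : ∑ v, (K.degree v + if K.degree v ≤ 1 then 1 else 0) ≤ ∑ _v : W, 2 :=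
    Finset.sum_le_sum fun v _ => by have := hdeg v; split_ifs <;> omega
  rw [Finset.sum_add_distrib, sum_degrees_eq_twice_card_edges, Finset.sum_boole] at hsum
  simp only [Finset.sum_const, Finset.card_univ, smul_eq_mul, Nat.cast_id] at hsum
  omega

theorem eq_or_eq_or_eq_of_reachable_of_degree_le_one {W : Type*} [Fintype W] [DecidableEq W]
    {K : SimpleGraph W} [DecidableRel K.Adj] (hdeg : ∀ v, K.degree v ≤ 2) {a b d : W}
    (ha : K.degree a ≤ 1) (hb : K.degree b ≤ 1) (hd : K.degree d ≤ 1) (hab : K.Reachable a b)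
    (hbd : K.Reachable b d) : a = b ∨ a = d ∨ b = d := by
  set C := K.connectedComponentMk a
  have hdegC : ∀ v : C.supp, (K.induce C.supp).degree v = K.degree v := fun v =>
    degree_induce_of_neighborSet_subset fun w hw => C.mem_supp_of_adj_mem_supp v.2 hw
  have haC : a ∈ C.supp := ConnectedComponent.connectedComponentMk_mem
  have hbC : b ∈ C.supp := ConnectedComponent.sound hab.symm
  have hdC : d ∈ C.supp := ConnectedComponent.sound (hab.trans hbd).symm
  have hC := Connected.card_filter_degree_le_one_le_two_s2 (K := K.induce C.supp)
    C.connected_toSimpleGraph fun v => (hdegC v).trans_le (hdeg v)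
  by_contra! hne
  have hsub : ({⟨a, haC⟩, ⟨b, hbC⟩, ⟨d, hdC⟩} : Finset C.supp) ⊆
      Finset.univ.filter fun v => (K.induce C.supp).degree v ≤ 1 := by
    intro v hv
    simp only [Finset.mem_insert, Finset.mem_singleton] at hv
    rcases hv with rfl | rfl | rfl <;> simpa [hdegC]
  have := Finset.card_le_card hsub
  rw [Finset.card_insert_of_notMem (by simp [hne.1, hne.2.1]),
    Finset.card_pair (by simpa using hne.2.2)] at this
  omega

theorem Reachable.deleteIncidenceSet {W : Type*} {K : SimpleGraph W} {a x z : W}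
    (h : K.Reachable x a) (ha : a ≠ x) (hz : ∀ w, K.Adj x w → w = z) :
    (K.deleteIncidenceSet x).Reachable z a := by
  obtain ⟨p, hp⟩ := h.exists_isPath
  cases p with
  | nil => exact absurd rfl ha
  | cons hxw q =>
    obtain rfl := hz _ hxw
    have hxq : x ∉ q.support := ((Walk.cons_isPath_iff hxw q).mp hp).2
    refine ⟨q.toDeleteEdges _ fun e he hex => hxq ?_⟩
    obtain ⟨y, rfl⟩ := Sym2.mem_iff_exists.mp hex.2
    exact q.fst_mem_support_of_mem_edges he

variable {V : Type} {G : SimpleGraph V} {D D' : Set (Sym2 V)} {k : ℕ} {c : Sym2 V → ℕ}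
  {α β : ℕ} {u x : V} {f : ℕ → V} {n : ℕ}

def IsFreeColour (G : SimpleGraph V) (D : Set (Sym2 V)) (c : Sym2 V → ℕ) (v : V) (b : ℕ) :
    Prop :=
  ∀ w, G.Adj v w → s(v, w) ∉ D → c s(v, w) ≠ b

theorem IsFreeColour.mono {v : V} {b : ℕ} (h : G.IsFreeColour D c v b) (hD : D ⊆ D') :
    G.IsFreeColour D' c v b :=
  fun w hw hwD => h w hw fun h' => hwD (hD h')

theorem exists_isFreeColour [Fintype V] [DecidableRel G.Adj] {Δ : ℕ}
    (hΔ : ∀ v, G.degree v ≤ Δ) (D : Set (Sym2 V)) (c : Sym2 V → ℕ) (v : V) :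
    ∃ b ∈ Finset.Icc 1 (Δ + 1), G.IsFreeColour D c v b := by
  classical
  set used := ((G.neighborFinset v).filter fun w => s(v, w) ∉ D).image fun w => c s(v, w)
  have hcard : used.card < (Finset.Icc 1 (Δ + 1)).card := by
    calc used.card ≤ G.degree v := Finset.card_image_le.trans (Finset.card_filter_le _ _)
      _ < _ := by simpa using Nat.lt_succ_of_le (hΔ v)
  obtain ⟨b, hb, hbu⟩ := Finset.exists_mem_notMem_of_card_lt_card hcard
  refine ⟨b, hb, fun w hw hwD hwb => hbu ?_⟩
  exact Finset.mem_image.mpr ⟨w, by simpa [hw] using hwD, hwb⟩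

theorem IsProperEC.mono (hc : G.IsProperEC D k c) (hD : D ⊆ D') : G.IsProperEC D' k c :=
  ⟨fun e he heD => hc.1 e he fun h => heD (hD h),
    fun e he f hf heD hfD => hc.2 e he f hf (fun h => heD (hD h)) fun h => hfD (hD h)⟩

theorem isProperEC_of_forall_adj (hk : ∀ e ∈ G.edgeSet, e ∉ D → c e ∈ Finset.Icc 1 k)
    (hc : ∀ v w w', G.Adj v w → G.Adj v w' → w ≠ w' → s(v, w) ∉ D → s(v, w') ∉ D →
      c s(v, w) ≠ c s(v, w')) :
    G.IsProperEC D k c := by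
  refine ⟨hk, fun e he f hf heD hfD ⟨hne, v, hve, hvf⟩ => ?_⟩
  obtain ⟨w, rfl⟩ := Sym2.mem_iff_exists.mp hve
  obtain ⟨w', rfl⟩ := Sym2.mem_iff_exists.mp hvf
  exact hc v w w' he hf (fun h => hne (h ▸ rfl)) heD hfD

theorem IsProperEC.eq_of_colour_eq (hc : G.IsProperEC D k c) {v w w' : V} (hw : G.Adj v w)
    (hw' : G.Adj v w') (hwD : s(v, w) ∉ D) (hw'D : s(v, w') ∉ D)
    (h : c s(v, w) = c s(v, w')) : w = w' := by
  by_contra hne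
  exact hc.2 _ hw _ hw' hwD hw'D ⟨fun h' => hne (Sym2.congr_right.mp h'), v,
    Sym2.mem_mk_left _ _, Sym2.mem_mk_left _ _⟩ h

theorem IsProperEC.isFreeColour_insert (hc : G.IsProperEC D k c) {v w : V} (hw : G.Adj v w)
    (hwD : s(v, w) ∉ D) : G.IsFreeColour (insert s(v, w) D) c v (c s(v, w)) := by
  intro w' hw' hw'D h
  obtain rfl := hc.eq_of_colour_eq hw' hw (fun h' => hw'D (Or.inr h')) hwD h
  exact hw'D (Set.mem_insert _ _)

theorem IsProperEC.update [DecidableEq V] {v : V} (hc : G.IsProperEC (insert s(u, v) D) k c)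
    {γ : ℕ} (hγ : γ ∈ Finset.Icc 1 k) (hu : G.IsFreeColour (insert s(u, v) D) c u γ)
    (hv : G.IsFreeColour (insert s(u, v) D) c v γ) :
    G.IsProperEC D k (Function.update c s(u, v) γ) := by
  have hfree : ∀ z w, G.Adj z w → s(z, w) ∉ insert s(u, v) D → z ∈ s(u, v) → c s(z, w) ≠ γ := by
    rintro z w hw hwD hz
    rcases Sym2.mem_iff.mp hz with rfl | rfl
    exacts [hu w hw hwD, hv w hw hwD]
  have hnew : ∀ z w w', G.Adj z w' → w ≠ w' → s(z, w') ∉ D → s(z, w) = s(u, v) →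
      Function.update c s(u, v) γ s(z, w) ≠ Function.update c s(u, v) γ s(z, w') := by
    intro z w w' hw' hne hw'D h
    have h' : s(z, w') ≠ s(u, v) := fun h' => hne (Sym2.congr_right.mp (h.trans h'.symm))
    rw [h, Function.update_self, Function.update_of_ne h']
    exact (hfree z w' hw' (by simp [h', hw'D]) (h ▸ Sym2.mem_mk_left z w)).symm
  refine isProperEC_of_forall_adj (fun e he heD => ?_) fun z w w' hw hw' hne hwD hw'D => ?_
  · rcases eq_or_ne e s(u, v) with rfl | h
    · simpa using hγ
    · rw [Function.update_of_ne h]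
      exact hc.1 e he (by simp [h, heD])
  · by_cases h : s(z, w) = s(u, v)
    · exact hnew z w w' hw' hne hw'D h
    by_cases h' : s(z, w') = s(u, v)
    · exact (hnew z w' w hw (Ne.symm hne) hwD h').symm
    rw [Function.update_of_ne h, Function.update_of_ne h']
    exact fun hcol => hne (hc.eq_of_colour_eq hw hw' (by simp [h, hwD]) (by simp [h', hw'D]) hcol)

theorem IsProperEC.shift [DecidableEq V] {w : V} (hc : G.IsProperEC (insert s(x, u) D) k c)
    (hw : G.Adj x w) (hwD : s(x, w) ∉ insert s(x, u) D)
    (hfree : G.IsFreeColour (insert s(x, u) D) c u (c s(x, w))) :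
    G.IsProperEC (insert s(x, w) D) k (Function.update c s(x, u) (c s(x, w))) := by
  have hx := hc.isFreeColour_insert hw hwD
  rw [Set.insert_comm] at hx
  exact (hc.mono (Set.insert_subset_insert (Set.subset_insert _ _))).update (hc.1 _ hw hwD) hx
    (hfree.mono (Set.insert_subset_insert (Set.subset_insert _ _)))

def kempeGraph (G : SimpleGraph V) (D : Set (Sym2 V)) (c : Sym2 V → ℕ) (α β : ℕ) :
    SimpleGraph V :=
  fromEdgeSet {e | e ∈ G.edgeSet ∧ e ∉ D ∧ (c e = α ∨ c e = β)}

@[simp]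
theorem kempeGraph_adj {v : V} :
    (G.kempeGraph D c α β).Adj u v ↔
      G.Adj u v ∧ s(u, v) ∉ D ∧ (c s(u, v) = α ∨ c s(u, v) = β) := by
  simp only [kempeGraph, fromEdgeSet_adj]
  exact ⟨fun h => h.1, fun h => ⟨h, h.1.ne⟩⟩

theorem IsProperEC.eq_of_kempeGraph_adj (hc : G.IsProperEC D k c)
    (hα : G.IsFreeColour D c x α) {z : V} (hz : G.Adj x z) (hzD : s(x, z) ∉ D)
    (hzβ : c s(x, z) = β) {w : V} (hw : (G.kempeGraph D c α β).Adj x w) : w = z := by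
  obtain ⟨hw, hwD, hcol⟩ := kempeGraph_adj.mp hw
  exact hc.eq_of_colour_eq hw hz hwD hzD ((hcol.resolve_left (hα w hw hwD)).trans hzβ.symm)

section KempeDegree

variable [Fintype V] [DecidableRel (G.kempeGraph D c α β).Adj]

theorem IsProperEC.degree_kempeGraph_le_card (hc : G.IsProperEC D k c) {v : V} (S : Finset ℕ)
    (hS : ∀ w, (G.kempeGraph D c α β).Adj v w → c s(v, w) ∈ S) :
    (G.kempeGraph D c α β).degree v ≤ S.card := by
  refine Finset.card_le_card_of_injOn (fun w => c s(v, w)) (fun w hw => hS w (by simpa using hw))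
    fun w hw w' hw' h => ?_
  simp only [Finset.mem_coe, mem_neighborFinset, kempeGraph_adj] at hw hw'
  exact hc.eq_of_colour_eq hw.1 hw'.1 hw.2.1 hw'.2.1 h

theorem IsProperEC.degree_kempeGraph_le_two (hc : G.IsProperEC D k c) (v : V) :
    (G.kempeGraph D c α β).degree v ≤ 2 :=
  (hc.degree_kempeGraph_le_card {α, β} fun _ hw => by simpa using (kempeGraph_adj.mp hw).2.2).trans
    Finset.card_le_two

theorem IsProperEC.degree_kempeGraph_le_one (hc : G.IsProperEC D k c) {v : V}
    (hβ : G.IsFreeColour D c v β) : (G.kempeGraph D c α β).degree v ≤ 1 := by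
  refine (hc.degree_kempeGraph_le_card {α} fun w hw => ?_).trans_eq (Finset.card_singleton α)
  obtain ⟨hw, hwD, hcol⟩ := kempeGraph_adj.mp hw
  simpa using hcol.resolve_right (hβ w hw hwD)

end KempeDegree

/-- Swapping `α` and `β` on every edge that meets the component of `u` only changes the edges of
that component: any other edge meeting it is uncoloured or has a colour fixed by the swap. -/
noncomputable def kempeSwap (G : SimpleGraph V) (D : Set (Sym2 V)) (c : Sym2 V → ℕ) (α β : ℕ)
    (u : V) (e : Sym2 V) : ℕ :=
  open Classical in
  if ∃ v ∈ e, (G.kempeGraph D c α β).Reachable u v then Equiv.swap α β (c e) else c e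

theorem kempeSwap_apply_of_reachable {v : V} {e : Sym2 V} (hv : v ∈ e)
    (h : (G.kempeGraph D c α β).Reachable u v) :
    G.kempeSwap D c α β u e = Equiv.swap α β (c e) :=
  if_pos ⟨v, hv, h⟩

theorem kempeSwap_apply_of_not_reachable {v w : V} (hw : G.Adj v w) (hwD : s(v, w) ∉ D)
    (h : ¬(G.kempeGraph D c α β).Reachable u v) :
    G.kempeSwap D c α β u s(v, w) = c s(v, w) := by
  unfold kempeSwap
  split_ifs with hr
  swap
  · rfl
  obtain ⟨z, hz, hz'⟩ := hr
  rcases Sym2.mem_iff.mp hz with rfl | rfl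
  · exact absurd hz' h
  have hcol : ¬(c s(v, z) = α ∨ c s(v, z) = β) := fun hcol =>
    h (hz'.trans (kempeGraph_adj.mpr ⟨hw.symm, Sym2.eq_swap ▸ hwD, Sym2.eq_swap ▸ hcol⟩).reachable)
  obtain ⟨hzα, hzβ⟩ := not_or.mp hcol
  exact Equiv.swap_apply_of_ne_of_ne hzα hzβ

theorem IsProperEC.kempeSwap (hc : G.IsProperEC D k c) (hα : α ∈ Finset.Icc 1 k)
    (hβ : β ∈ Finset.Icc 1 k) : G.IsProperEC D k (G.kempeSwap D c α β u) := by
  refine isProperEC_of_forall_adj (fun e he heD => ?_) fun z w w' hw hw' hne hwD hw'D => ?_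
  · unfold SimpleGraph.kempeSwap
    rw [Equiv.swap_apply_def]
    split_ifs <;> first | assumption | exact hc.1 e he heD
  · have hcol : c s(z, w) ≠ c s(z, w') := fun h => hne (hc.eq_of_colour_eq hw hw' hwD hw'D h)
    by_cases hz : (G.kempeGraph D c α β).Reachable u z
    · rw [kempeSwap_apply_of_reachable (Sym2.mem_mk_left z w) hz,
        kempeSwap_apply_of_reachable (Sym2.mem_mk_left z w') hz]
      exact (Equiv.injective _).ne hcol
    · rwa [kempeSwap_apply_of_not_reachable hw hwD hz,
        kempeSwap_apply_of_not_reachable hw' hw'D hz]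

theorem IsFreeColour.kempeSwap_self (hβ : G.IsFreeColour D c u β) :
    G.IsFreeColour D (G.kempeSwap D c α β u) u α := by
  intro w hw hwD
  rw [kempeSwap_apply_of_reachable (Sym2.mem_mk_left u w) Reachable.rfl, Ne,
    Equiv.swap_apply_eq_iff, Equiv.swap_apply_left]
  exact hβ w hw hwD

theorem IsFreeColour.kempeSwap_of_not_reachable {v : V} {γ : ℕ} (h : G.IsFreeColour D c v γ)
    (hv : ¬(G.kempeGraph D c α β).Reachable u v) :
    G.IsFreeColour D (G.kempeSwap D c α β u) v γ := by
  intro w hw hwD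
  rw [kempeSwap_apply_of_not_reachable hw hwD hv]
  exact h w hw hwD

theorem IsProperEC.exists_of_not_reachable {z : V} (hc : G.IsProperEC (insert s(x, z) D) k c)
    (hα : α ∈ Finset.Icc 1 k) (hβ : β ∈ Finset.Icc 1 k)
    (hx : G.IsFreeColour (insert s(x, z) D) c x α) (hz : G.IsFreeColour (insert s(x, z) D) c z β)
    (h : ¬(G.kempeGraph (insert s(x, z) D) c α β).Reachable z x) :
    ∃ c', G.IsProperEC D k c' := by
  classical
  exact ⟨_, (hc.kempeSwap hα hβ).update hα (hx.kempeSwap_of_not_reachable h) hz.kempeSwap_self⟩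

/-- `c` is meant to be proper off `insert s(x, f 0) D`: `x f 0` is the edge to be coloured. -/
structure IsFan (G : SimpleGraph V) (D : Set (Sym2 V)) (c : Sym2 V → ℕ) (x : V) (f : ℕ → V)
    (n : ℕ) : Prop where
  adj : ∀ j ≤ n, G.Adj x (f j)
  injOn : Set.InjOn f (Set.Iic n)
  notMem : ∀ j ≤ n, s(x, f j) ∉ D
  isFreeColour : ∀ j < n, G.IsFreeColour (insert s(x, f 0) D) c (f j) (c s(x, f (j + 1)))

namespace IsFan

theorem apply_ne_apply (hF : G.IsFan D c x f n) {a b : ℕ} (ha : a ≤ n) (hb : b ≤ n)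
    (hab : a ≠ b) : f a ≠ f b :=
  fun h => hab (hF.injOn (Set.mem_Iic.mpr ha) (Set.mem_Iic.mpr hb) h)

theorem notMem_insert (hF : G.IsFan D c x f n) {a b : ℕ} (ha : a ≤ n) (hb : b ≤ n)
    (hab : a ≠ b) : s(x, f a) ∉ insert s(x, f b) D := by
  rintro (h | h)
  exacts [hF.apply_ne_apply ha hb hab (Sym2.congr_right.mp h), hF.notMem a ha h]

theorem snoc (hF : G.IsFan D c x f n) {w : V} (hw : G.Adj x w) (hwD : s(x, w) ∉ D)
    (hfree : G.IsFreeColour (insert s(x, f 0) D) c (f n) (c s(x, w)))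
    (hnew : ∀ j ≤ n, f j ≠ w) : G.IsFan D c x (Function.update f (n + 1) w) (n + 1) := by
  have hf : ∀ j ≤ n, Function.update f (n + 1) w j = f j := fun j hj =>
    Function.update_of_ne (by omega) _ _
  refine ⟨fun j hj => ?_, fun a ha b hb hab => ?_, fun j hj => ?_, fun j hj => ?_⟩
  · rcases Nat.lt_succ_iff_lt_or_eq.mp (Nat.lt_succ_of_le hj) with hj | rfl
    · exact hf j (by omega) ▸ hF.adj j (by omega)
    · simpa using hw
  · simp only [Set.mem_Iic] at ha hb
    rcases Nat.lt_or_ge a (n + 1) with ha' | ha' <;> rcases Nat.lt_or_ge b (n + 1) with hb' | hb'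
    · rw [hf a (by omega), hf b (by omega)] at hab
      exact hF.injOn (Set.mem_Iic.mpr (by omega)) (Set.mem_Iic.mpr (by omega)) hab
    · obtain rfl : b = n + 1 := by omega
      rw [hf a (by omega), Function.update_self] at hab
      exact absurd hab (hnew a (by omega))
    · obtain rfl : a = n + 1 := by omega
      rw [hf b (by omega), Function.update_self] at hab
      exact absurd hab.symm (hnew b (by omega))
    · omega
  · rcases Nat.lt_succ_iff_lt_or_eq.mp (Nat.lt_succ_of_le hj) with hj | rfl
    · exact hf j (by omega) ▸ hF.notMem j (by omega)
    · simpa using hwD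
  · rw [hf 0 (Nat.zero_le n), hf j (by omega)]
    rcases Nat.lt_succ_iff_lt_or_eq.mp hj with hj | rfl
    · rw [hf (j + 1) hj]
      exact hF.isFreeColour j hj
    · simpa using hfree

theorem lt_card [Fintype V] (hF : G.IsFan D c x f n) : n < Fintype.card V := by
  have := Finset.card_le_card_of_injOn f (fun _ _ => Finset.mem_coe.mpr (Finset.mem_univ _))
    (hF.injOn.mono fun m hm => by simp at hm ⊢; omega : Set.InjOn f (Finset.range (n + 1)))
  simpa using this

end IsFan

theorem exists_maximal_isFan [Fintype V] {y : V} (hxy : G.Adj x y) (hxyD : s(x, y) ∉ D) :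
    ∃ f n, f 0 = y ∧ G.IsFan D c x f n ∧ ∀ w, G.Adj x w → s(x, w) ∉ D →
      G.IsFreeColour (insert s(x, y) D) c (f n) (c s(x, w)) → ∃ j ≤ n, f j = w := by
  classical
  let P n := ∃ f, f 0 = y ∧ G.IsFan D c x f n
  have hP0 : P 0 := ⟨fun _ => y, rfl, fun _ _ => hxy, fun _ _ _ _ _ => by simp_all,
    fun _ _ => hxyD, fun _ h => absurd h (Nat.not_lt_zero _)⟩
  obtain ⟨f, rfl, hF⟩ : P (Nat.findGreatest P (Fintype.card V)) :=
    Nat.findGreatest_spec (Nat.zero_le _) hP0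
  refine ⟨f, _, rfl, hF, fun w hw hwD hfree => ?_⟩
  by_contra! hnew
  have hF' := hF.snoc hw hwD hfree hnew
  exact Nat.findGreatest_is_greatest (Nat.lt_succ_self _) hF'.lt_card.le
    ⟨_, by simp [Function.update_of_ne], hF'⟩

section Rotate

variable [DecidableEq V] {j : ℕ}

/-- The value at `s(x, f j)` is stale: that edge is the uncoloured one. -/
def rotate (c : Sym2 V → ℕ) (x : V) (f : ℕ → V) : ℕ → Sym2 V → ℕ
  | 0 => c
  | j + 1 => Function.update (rotate c x f j) s(x, f j) (c s(x, f (j + 1)))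

theorem rotate_apply_of_forall_ne {e : Sym2 V} (h : ∀ m < j, e ≠ s(x, f m)) :
    rotate c x f j e = c e := by
  induction j with
  | zero => rfl
  | succ j ih =>
    rw [rotate, Function.update_of_ne (h j j.lt_succ_self)]
    exact ih fun m hm => h m (hm.trans j.lt_succ_self)

theorem rotate_apply_of_notMem {e : Sym2 V} (h : x ∉ e) : rotate c x f j e = c e :=
  rotate_apply_of_forall_ne fun _ _ he => h (he ▸ Sym2.mem_mk_left _ _)

theorem rotate_apply_of_lt (hf : Set.InjOn f (Set.Iic j)) {m : ℕ} (hm : m < j) :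
    rotate c x f j s(x, f m) = c s(x, f (m + 1)) := by
  induction j with
  | zero => omega
  | succ j ih =>
    rw [rotate]
    rcases Nat.lt_succ_iff_lt_or_eq.mp hm with hm | rfl
    · rw [Function.update_of_ne, ih (hf.mono (Set.Iic_subset_Iic.mpr j.le_succ)) hm]
      intro h
      have := hf (by simp; omega) (by simp) (Sym2.congr_right.mp h)
      omega
    · rw [Function.update_self]

theorem IsFreeColour.rotate {γ : ℕ} (h : G.IsFreeColour (insert s(x, f 0) D) c (f j) γ)
    (hx : f j ≠ x) : G.IsFreeColour (insert s(x, f j) D) (rotate c x f j) (f j) γ := by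
  intro w hw hwD
  have hwx : w ≠ x := by
    rintro rfl
    exact hwD (Sym2.eq_swap ▸ Set.mem_insert _ _)
  have hxe : x ∉ s(f j, w) := by simp [Sym2.mem_iff, hx.symm, hwx.symm]
  rw [rotate_apply_of_notMem hxe]
  refine h w hw ?_
  rintro (he | he)
  · exact hxe (he ▸ Sym2.mem_mk_left _ _)
  · exact hwD (Or.inr he)

theorem deleteIncidenceSet_kempeGraph_rotate_le (j : ℕ) :
    (G.kempeGraph (insert s(x, f j) D) (rotate c x f j) α β).deleteIncidenceSet x ≤
      G.kempeGraph (D ∪ {e | x ∈ e}) c α β := by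
  intro u v h
  rw [deleteIncidenceSet_adj, kempeGraph_adj] at h
  obtain ⟨⟨huv, hD, hcol⟩, hu, hv⟩ := h
  have hx : x ∉ s(u, v) := by simp [Sym2.mem_iff, hu.symm, hv.symm]
  rw [rotate_apply_of_notMem hx] at hcol
  exact kempeGraph_adj.mpr ⟨huv, by simpa [hx] using fun h => hD (Or.inr h), hcol⟩

namespace IsFan

theorem isFreeColour_rotate_center (hF : G.IsFan D c x f n) (hj : j ≤ n) {γ : ℕ}
    (h : G.IsFreeColour (insert s(x, f 0) D) c x γ) :
    G.IsFreeColour (insert s(x, f j) D) (rotate c x f j) x γ := by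
  intro w hw hwD
  by_cases hsh : ∃ m < j, w = f m
  · obtain ⟨m, hm, rfl⟩ := hsh
    rw [rotate_apply_of_lt (hF.injOn.mono (Set.Iic_subset_Iic.mpr hj)) hm]
    exact h _ (hF.adj _ (by omega)) (hF.notMem_insert (by omega) (by omega) (by omega))
  simp only [not_exists, not_and] at hsh
  rw [rotate_apply_of_forall_ne fun m hm he => hsh m hm (Sym2.congr_right.mp he)]
  refine h w hw ?_
  rintro (he | he)
  · obtain rfl := Sym2.congr_right.mp he
    rcases Nat.eq_zero_or_pos j with rfl | hj0
    · exact hwD (Set.mem_insert _ _)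
    · exact hsh 0 hj0 rfl
  · exact hwD (Or.inr he)

theorem isProperEC_rotate (hF : G.IsFan D c x f n) (hc : G.IsProperEC (insert s(x, f 0) D) k c)
    (hj : j ≤ n) : G.IsProperEC (insert s(x, f j) D) k (rotate c x f j) := by
  induction j with
  | zero => exact hc
  | succ j ih =>
    have hrot : rotate c x f j s(x, f (j + 1)) = c s(x, f (j + 1)) :=
      rotate_apply_of_forall_ne fun m hm he =>
        hF.apply_ne_apply hj (by omega) (by omega) (Sym2.congr_right.mp he)
    have hfree := (hF.isFreeColour j hj).rotate (hF.adj j (by omega)).ne'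
    rw [← hrot] at hfree
    have := (ih (by omega)).shift (hF.adj (j + 1) hj)
      (hF.notMem_insert hj (by omega) (by omega)) hfree
    rwa [hrot] at this

theorem reachable_of_reachable_rotate (hF : G.IsFan D c x f n)
    (hc : G.IsProperEC (insert s(x, f 0) D) k c) (hα : G.IsFreeColour (insert s(x, f 0) D) c x α)
    {m : ℕ} (hj : j ≤ n) (hm : m ≤ n) (hjm : j ≠ m) (hβ : rotate c x f j s(x, f m) = β)
    (h : (G.kempeGraph (insert s(x, f j) D) (rotate c x f j) α β).Reachable (f j) x) :
    (G.kempeGraph (D ∪ {e | x ∈ e}) c α β).Reachable (f m) (f j) :=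
  (h.symm.deleteIncidenceSet (hF.adj j hj).ne' fun _ hw =>
    (hF.isProperEC_rotate hc hj).eq_of_kempeGraph_adj (hF.isFreeColour_rotate_center hj hα)
      (hF.adj m hm) (hF.notMem_insert hm hj hjm.symm) hβ hw).mono
    (deleteIncidenceSet_kempeGraph_rotate_le j)

theorem not_reachable_rotate [Fintype V] (hF : G.IsFan D c x f n)
    (hc : G.IsProperEC (insert s(x, f 0) D) k c) (hα : G.IsFreeColour (insert s(x, f 0) D) c x α)
    (hβn : G.IsFreeColour (insert s(x, f 0) D) c (f n) β) {i : ℕ} (hi : i + 1 < n)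
    (hβi : c s(x, f (i + 1)) = β)
    (hn : (G.kempeGraph (insert s(x, f n) D) (rotate c x f n) α β).Reachable (f n) x) :
    ¬(G.kempeGraph (insert s(x, f i) D) (rotate c x f i) α β).Reachable (f i) x := by
  classical
  intro hi'
  have h₁ := hF.reachable_of_reachable_rotate hc hα le_rfl (m := i) (by omega) (by omega)
    (by rw [rotate_apply_of_lt hF.injOn (by omega), hβi]) hn
  have h₂ := hF.reachable_of_reachable_rotate hc hα (j := i) (m := i + 1) (by omega) (by omega)
    (by omega) (by
      rw [rotate_apply_of_forall_ne fun m hm he =>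
        hF.apply_ne_apply (by omega) (by omega) (by omega) (Sym2.congr_right.mp he), hβi]) hi'
  have hsub : insert s(x, f 0) D ⊆ D ∪ {e | x ∈ e} :=
    Set.insert_subset (Or.inr (Sym2.mem_mk_left _ _)) Set.subset_union_left
  have hcH := hc.mono hsub
  have hβi₁ : G.IsFreeColour (D ∪ {e | x ∈ e}) c (f (i + 1)) β := by
    have := hc.isFreeColour_insert (hF.adj (i + 1) (by omega)).symm <| by
      rw [Sym2.eq_swap (a := f (i + 1))]
      exact hF.notMem_insert (by omega) (by omega) (by omega)
    rw [Sym2.eq_swap, hβi] at this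
    exact this.mono (Set.insert_subset (Or.inr (Sym2.mem_mk_left _ _)) hsub)
  have hβi₀ : G.IsFreeColour (insert s(x, f 0) D) c (f i) β := hβi ▸ hF.isFreeColour i (by omega)
  rcases eq_or_eq_or_eq_of_reachable_of_degree_le_one hcH.degree_kempeGraph_le_two
    (hcH.degree_kempeGraph_le_one hβi₁) (hcH.degree_kempeGraph_le_one (hβi₀.mono hsub))
    (hcH.degree_kempeGraph_le_one (hβn.mono hsub)) h₂ h₁ with h | h | h <;>
  exact hF.apply_ne_apply (by omega) (by omega) (by omega) h

end IsFan

end Rotate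

namespace IsFan

theorem exists_of_isFreeColour_center (hF : G.IsFan D c x f n)
    (hc : G.IsProperEC (insert s(x, f 0) D) k c) (hβ : β ∈ Finset.Icc 1 k)
    (hβx : G.IsFreeColour (insert s(x, f 0) D) c x β)
    (hβn : G.IsFreeColour (insert s(x, f 0) D) c (f n) β) : ∃ c', G.IsProperEC D k c' := by
  classical
  exact ⟨_, (hF.isProperEC_rotate hc le_rfl).update hβ (hF.isFreeColour_rotate_center le_rfl hβx)
    (hβn.rotate (hF.adj n le_rfl).ne')⟩

theorem exists_of_lt [Fintype V] (hF : G.IsFan D c x f n)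
    (hc : G.IsProperEC (insert s(x, f 0) D) k c) (hα : α ∈ Finset.Icc 1 k)
    (hβ : β ∈ Finset.Icc 1 k) (hαx : G.IsFreeColour (insert s(x, f 0) D) c x α)
    (hβn : G.IsFreeColour (insert s(x, f 0) D) c (f n) β) {i : ℕ} (hi : i + 1 < n)
    (hβi : c s(x, f (i + 1)) = β) : ∃ c', G.IsProperEC D k c' := by
  classical
  by_cases hn : (G.kempeGraph (insert s(x, f n) D) (rotate c x f n) α β).Reachable (f n) x
  · have hβi₀ : G.IsFreeColour (insert s(x, f 0) D) c (f i) β :=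
      hβi ▸ hF.isFreeColour i (by omega)
    exact (hF.isProperEC_rotate hc (by omega)).exists_of_not_reachable hα hβ
      (hF.isFreeColour_rotate_center (by omega) hαx) (hβi₀.rotate (hF.adj i (by omega)).ne')
      (hF.not_reachable_rotate hc hαx hβn hi hβi hn)
  · exact (hF.isProperEC_rotate hc le_rfl).exists_of_not_reachable hα hβ
      (hF.isFreeColour_rotate_center le_rfl hαx) (hβn.rotate (hF.adj n le_rfl).ne') hn

end IsFan

variable [Fintype V] [DecidableRel G.Adj] {Δ : ℕ}

theorem IsProperEC.exists_of_insert (hΔ : ∀ v, G.degree v ≤ Δ) {y : V}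
    (hc : G.IsProperEC (insert s(x, y) D) (Δ + 1) c) (hxy : G.Adj x y) :
    ∃ c', G.IsProperEC D (Δ + 1) c' := by
  by_cases hxyD : s(x, y) ∈ D
  · exact ⟨c, by rwa [Set.insert_eq_of_mem hxyD] at hc⟩
  obtain ⟨f, n, rfl, hF, hmax⟩ := exists_maximal_isFan (c := c) hxy hxyD
  obtain ⟨α, hα, hαx⟩ := exists_isFreeColour hΔ (insert s(x, f 0) D) c x
  obtain ⟨β, hβ, hβn⟩ := exists_isFreeColour hΔ (insert s(x, f 0) D) c (f n)
  by_cases hβx : G.IsFreeColour (insert s(x, f 0) D) c x β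
  · exact hF.exists_of_isFreeColour_center hc hβ hβx hβn
  simp only [IsFreeColour, not_forall, not_not] at hβx
  obtain ⟨w, hw, hwD, hwβ⟩ := hβx
  obtain ⟨j, hj, rfl⟩ := hmax w hw (fun h => hwD (Or.inr h)) (hwβ ▸ hβn)
  obtain ⟨i, rfl⟩ : ∃ i, j = i + 1 :=
    Nat.exists_eq_succ_of_ne_zero fun h => hwD (h ▸ Set.mem_insert _ _)
  have hin : i + 1 ≠ n := by
    rintro rfl
    exact hβn x hw.symm (by rwa [Sym2.eq_swap (a := f (i + 1))]) (by rw [Sym2.eq_swap, hwβ])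
  exact hF.exists_of_lt hc hα hβ hαx hβn (lt_of_le_of_ne hj hin) hwβ

theorem exists_isProperEC_sdiff (hΔ : ∀ v, G.degree v ≤ Δ) (S : Finset (Sym2 V))
    (hS : S ⊆ G.edgeFinset) : ∃ c, G.IsProperEC (G.edgeSet \ S) (Δ + 1) c := by
  classical
  induction S using Finset.induction_on with
  | empty => exact ⟨fun _ => 1, fun e he h => absurd he (by simpa using h),
      fun e he _ _ h => absurd he (by simpa using h)⟩
  | @insert e S heS ih =>
    obtain ⟨c, hc⟩ := ih ((Finset.subset_insert e S).trans hS)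
    have he : e ∈ G.edgeSet := by simpa using hS (Finset.mem_insert_self e S)
    have hD : G.edgeSet \ S = insert e (G.edgeSet \ ↑(insert e S)) := by
      ext e'
      by_cases h : e' = e <;> simp [h, he, heS]
    rw [hD] at hc
    induction e using Sym2.ind with
    | _ x y => exact hc.exists_of_insert hΔ he

end SimpleGraph

open SimpleGraph

theorem vizing_simple_general {V : Type} [Fintype V] (G : SimpleGraph V)
    [DecidableRel G.Adj] (Δ : ℕ) (hΔ : ∀ v, G.degree v ≤ Δ) :
    ∃ c : Sym2 V → ℕ, G.IsProperEC ∅ (Δ + 1) c := by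
  obtain ⟨c, hc⟩ := exists_isProperEC_sdiff hΔ G.edgeFinset subset_rfl
  exact ⟨c, by simpa using hc⟩

/-- **Vizing's theorem.** Every simple graph with maximum degree `Δ` has a
proper edge-colouring with colours from `{1, …, Δ + 1}`. -/
theorem vizing_simple {V : Type} [Fintype V] [DecidableEq V] (G : SimpleGraph V)
    [DecidableRel G.Adj] (Δ : ℕ) (hΔ : ∀ v, G.degree v ≤ Δ) :
    ∃ c : Sym2 V → ℕ, G.IsProperEC ∅ (Δ + 1) c :=
  vizing_simple_general G Δ hΔ
end

section
/- Let G be a simple graph with maximum degree Δ and let M be a maximal matching of G. Then G \ M admits a proper edge-colouring using at most Δ colours. -/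
open SimpleGraph
open Finset

namespace SimpleGraph

variable {V : Type*} [Fintype V] {G : SimpleGraph V} [DecidableRel G.Adj]

/-- A connected graph on `n` vertices has at least `n - 1` edges, but three vertices of degree
at most one in a component of maximum degree two would bring its degree sum down to `2n - 3`. -/
theorem eq_or_eq_or_eq_of_reachable_of_degree_le_one_s3 (hG : ∀ x, G.degree x ≤ 2) {u y z : V}
    (hu : G.degree u ≤ 1) (hy : G.degree y ≤ 1) (hz : G.degree z ≤ 1)
    (huy : G.Reachable u y) (huz : G.Reachable u z) : u = y ∨ u = z ∨ y = z := by
  classical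
  by_contra! hne
  obtain ⟨huy', huz', hyz'⟩ := hne
  generalize hC : G.connectedComponentMk u = C
  have hmem : ∀ {x}, G.Reachable u x → x ∈ C.supp := fun h =>
    (C.mem_supp_iff _).2 (hC ▸ ConnectedComponent.eq.2 h.symm)
  have hdeg : ∀ x : C.supp, (G.induce C.supp).degree x = G.degree x := fun x =>
    degree_induce_of_neighborSet_subset fun w hw => C.mem_supp_of_adj_mem_supp x.2 hw
  let T : Finset C.supp := {⟨u, hmem .rfl⟩, ⟨y, hmem huy⟩, ⟨z, hmem huz⟩}
  have hT : #T = 3 := by simp [T, card_insert_of_notMem, huy', huz', hyz']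
  have hle : ∀ x, (G.induce C.supp).degree x + (if x ∈ T then 1 else 0) ≤ 2 := by
    intro x
    rw [hdeg]
    split_ifs with hx
    · simp only [T, mem_insert, mem_singleton] at hx
      rcases hx with rfl | rfl | rfl <;> simpa
    · simpa using hG x
  have hsum : ∑ x, (G.induce C.supp).degree x + #T ≤ 2 * Fintype.card C.supp :=
    calc ∑ x, (G.induce C.supp).degree x + #T
        = ∑ x, ((G.induce C.supp).degree x + if x ∈ T then 1 else 0) := by
          rw [sum_add_distrib, sum_boole, filter_mem_eq_inter, univ_inter]; rfl
      _ ≤ ∑ _x : C.supp, 2 := sum_le_sum fun x _ => hle x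
      _ = 2 * Fintype.card C.supp := by rw [sum_const, card_univ, smul_eq_mul, mul_comm]
  have hconn := (ConnectedComponent.maximal_connected_induce_supp C).prop
  have hedges := hconn.card_vert_le_card_edgeSet_add_one
  rw [Nat.card_eq_fintype_card, Nat.card_eq_fintype_card, ← edgeFinset_card] at hedges
  have := (G.induce C.supp).sum_degrees_eq_twice_card_edges
  omega

end SimpleGraph

namespace EdgeColoring

variable {V : Type} {κ : Type*} {E E' : Finset (Sym2 V)} {K : Finset κ} {c : Sym2 V → κ}
  {u v w x y z t : V} {L : List V} {e : Sym2 V} {α β γ : κ}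

def IsMissing (c : Sym2 V → κ) (E : Finset (Sym2 V)) (x : V) (γ : κ) : Prop :=
  ∀ e ∈ E, x ∈ e → c e ≠ γ

def IsProper (E : Finset (Sym2 V)) (c : Sym2 V → κ) : Prop :=
  ∀ e ∈ E, ∀ f ∈ E, EdgeAdj e f → c e ≠ c f

structure IsColoring (K : Finset κ) (E : Finset (Sym2 V)) (c : Sym2 V → κ) : Prop where
  mem_palette : ∀ e ∈ E, c e ∈ K
  isProper : IsProper E c

theorem IsMissing.mono (h : IsMissing c E x γ) (hE : E' ⊆ E) : IsMissing c E' x γ :=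
  fun f hf => h f (hE hf)

theorem IsColoring.mono (hc : IsColoring K E c) (hE : E' ⊆ E) : IsColoring K E' c :=
  ⟨fun e he => hc.mem_palette e (hE he), fun e he f hf => hc.isProper e (hE he) f (hE hf)⟩

theorem exists_edge_forall_neighbor (hne : E.Nonempty) {p : V → Prop}
    (hp : ∀ e ∈ E, ∃ x ∈ e, p x) : ∃ u v, s(u, v) ∈ E ∧ ∀ w, s(u, w) ∈ E → p w := by
  by_cases h : ∃ u v, s(u, v) ∈ E ∧ ¬ p u
  · obtain ⟨u, v, huv, hu⟩ := h
    refine ⟨u, v, huv, fun w hw => ?_⟩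
    obtain ⟨x, hx, hpx⟩ := hp _ hw
    rcases Sym2.mem_iff.1 hx with rfl | rfl
    exacts [absurd hpx hu, hpx]
  · push Not at h
    obtain ⟨e, he⟩ := hne
    induction e using Sym2.ind with
    | h u v => exact ⟨u, v, he, fun w hw => h w u (Sym2.eq_swap ▸ hw)⟩

section Kempe

def kempeGraph (E : Finset (Sym2 V)) (c : Sym2 V → κ) (α β : κ) : SimpleGraph V :=
  fromEdgeSet {e | e ∈ E ∧ (c e = α ∨ c e = β)}

theorem kempeGraph_adj :
    (kempeGraph E c α β).Adj x y ↔ s(x, y) ∈ E ∧ (c s(x, y) = α ∨ c s(x, y) = β) ∧ x ≠ y := by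
  simp [kempeGraph, and_assoc]

/-- Properness makes `y ↦ c s(x, y)` injective on the neighbours of `x`. -/
theorem degree_kempeGraph_le [Fintype V] [DecidableRel (kempeGraph E c α β).Adj]
    (hc : IsProper E c) (S : Finset κ)
    (hS : ∀ y, (kempeGraph E c α β).Adj x y → c s(x, y) ∈ S) :
    (kempeGraph E c α β).degree x ≤ #S := by
  rw [← card_neighborFinset_eq_degree]
  refine card_le_card_of_injOn (fun y => c s(x, y)) (fun y hy => hS y (by simpa using hy)) ?_
  intro y hy y' hy' hyy'
  by_contra hne
  have hadj := (mem_neighborFinset _ _ _).1 hy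
  have hadj' := (mem_neighborFinset _ _ _).1 hy'
  exact hc _ (kempeGraph_adj.1 hadj).1 _ (kempeGraph_adj.1 hadj').1
    ⟨fun h => hne (Sym2.congr_right.1 h), x, Sym2.mem_mk_left _ _, Sym2.mem_mk_left _ _⟩ hyy'

theorem kempeGraph_not_reachable [Fintype V] (hc : IsProper E c) (hu : IsMissing c E u α)
    (hy : IsMissing c E y β) (hz : IsMissing c E z β) (huy : u ≠ y) (huz : u ≠ z) (hyz : y ≠ z)
    (h : (kempeGraph E c α β).Reachable u z) : ¬ (kempeGraph E c α β).Reachable u y := by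
  classical
  intro h'
  have hone : ∀ {x δ}, δ ∈ ({α, β} : Finset κ) → IsMissing c E x δ →
      (kempeGraph E c α β).degree x ≤ 1 := by
    intro x δ hδ hx
    refine (degree_kempeGraph_le hc (({α, β} : Finset κ).erase δ) fun w hw => ?_).trans ?_
    · obtain ⟨hw, hcw, -⟩ := kempeGraph_adj.1 hw
      exact mem_erase.2 ⟨hx _ hw (Sym2.mem_mk_left _ _), by simpa using hcw⟩
    · rw [card_erase_of_mem hδ]
      exact Nat.sub_le_sub_right card_le_two 1
  rcases SimpleGraph.eq_or_eq_or_eq_of_reachable_of_degree_le_one_s3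
    (fun x => (degree_kempeGraph_le hc {α, β} fun w hw => by
      simpa using (kempeGraph_adj.1 hw).2.1).trans card_le_two)
    (hone (by simp) hu) (hone (by simp) hy) (hone (by simp) hz) h' h
    with h | h | h
  exacts [huy h, huz h, hyz h]

variable [DecidableEq κ]

open Classical in
/-- The colours of all edges meeting the component of `t` go through `swap α β`, which moves
only the `α`- and `β`-edges, i.e. the edges of that component. -/
noncomputable def kempeSwap (E : Finset (Sym2 V)) (c : Sym2 V → κ) (α β : κ) (t : V)
    (e : Sym2 V) : κ :=
  if ∃ x ∈ e, (kempeGraph E c α β).Reachable t x then Equiv.swap α β (c e) else c e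

theorem kempeSwap_of_reachable (hx : x ∈ e) (h : (kempeGraph E c α β).Reachable t x) :
    kempeSwap E c α β t e = Equiv.swap α β (c e) :=
  if_pos ⟨x, hx, h⟩

theorem kempeSwap_of_not_reachable (he : e ∈ E) (hx : x ∈ e)
    (h : ¬ (kempeGraph E c α β).Reachable t x) : kempeSwap E c α β t e = c e := by
  unfold kempeSwap
  split_ifs with hswap
  · obtain ⟨y, hy, hty⟩ := hswap
    by_cases hc : c e = α ∨ c e = β
    · refine absurd ?_ h
      rcases eq_or_ne y x with rfl | hyx
      · exact hty
      have hadj : (kempeGraph E c α β).Adj y x := by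
        rw [kempeGraph_adj, ← (Sym2.mem_and_mem_iff hyx).1 ⟨hy, hx⟩]
        exact ⟨he, hc, hyx⟩
      exact hty.trans hadj.reachable
    · rw [not_or] at hc
      exact Equiv.swap_apply_of_ne_of_ne hc.1 hc.2
  · rfl

theorem kempeSwap_of_ne (hα : c e ≠ α) (hβ : c e ≠ β) : kempeSwap E c α β t e = c e := by
  unfold kempeSwap
  split_ifs
  exacts [Equiv.swap_apply_of_ne_of_ne hα hβ, rfl]

theorem IsColoring.kempeSwap (hc : IsColoring K E c) (hα : α ∈ K) (hβ : β ∈ K) :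
    IsColoring K E (kempeSwap E c α β t) := by
  constructor
  · intro e he
    unfold EdgeColoring.kempeSwap
    split_ifs
    · rw [Equiv.swap_apply_def]
      split_ifs
      exacts [hβ, hα, hc.mem_palette e he]
    · exact hc.mem_palette e he
  · intro e he f hf hef
    have ⟨_, x, hxe, hxf⟩ := hef
    by_cases hx : (kempeGraph E c α β).Reachable t x
    · rw [kempeSwap_of_reachable hxe hx, kempeSwap_of_reachable hxf hx]
      exact (Equiv.swap α β).injective.ne (hc.isProper e he f hf hef)
    · rw [kempeSwap_of_not_reachable he hxe hx, kempeSwap_of_not_reachable hf hxf hx]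
      exact hc.isProper e he f hf hef

theorem IsMissing.kempeSwap_of_not_reachable (h : IsMissing c E x γ)
    (hx : ¬ (kempeGraph E c α β).Reachable t x) : IsMissing (kempeSwap E c α β t) E x γ :=
  fun f hf hxf => by rw [EdgeColoring.kempeSwap_of_not_reachable hf hxf hx]; exact h f hf hxf

theorem IsMissing.kempeSwap_of_ne (h : IsMissing c E x γ) (hα : γ ≠ α) (hβ : γ ≠ β) :
    IsMissing (kempeSwap E c α β t) E x γ := by
  intro f hf hxf hγ
  unfold EdgeColoring.kempeSwap at hγ
  split_ifs at hγ
  · rw [Equiv.swap_apply_eq_iff, Equiv.swap_apply_of_ne_of_ne hα hβ] at hγ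
    exact h f hf hxf hγ
  · exact h f hf hxf hγ

theorem IsMissing.kempeSwap_self (h : IsMissing c E t β) :
    IsMissing (kempeSwap E c α β t) E t α := by
  intro f hf htf hα
  rw [kempeSwap_of_reachable htf .rfl, Equiv.swap_apply_eq_iff, Equiv.swap_apply_left] at hα
  exact h f hf htf hα

end Kempe

variable [DecidableEq V]

theorem IsProper.isMissing_erase (hc : IsProper E c) (he : e ∈ E) (hx : x ∈ e) :
    IsMissing c (E.erase e) x (c e) := fun f hf hxf hcf =>
  hc f (mem_of_mem_erase hf) e he ⟨ne_of_mem_erase hf, x, hxf, hx⟩ hcf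

theorem exists_isMissing (hx : #{e ∈ E | x ∈ e} < #K) : ∃ γ ∈ K, IsMissing c E x γ := by
  classical
  obtain ⟨γ, hγK, hγ⟩ : ∃ γ ∈ K, γ ∉ image c {e ∈ E | x ∈ e} :=
    exists_mem_notMem_of_card_lt_card (card_image_le.trans_lt hx)
  exact ⟨γ, hγK, fun e he hxe hce => hγ (mem_image.2 ⟨e, mem_filter.2 ⟨he, hxe⟩, hce⟩)⟩

theorem IsColoring.update (hc : IsColoring K (E.erase s(x, y)) c)
    (hxy : s(x, y) ∈ E) (hγ : γ ∈ K) (hx : IsMissing c (E.erase s(x, y)) x γ)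
    (hy : IsMissing c (E.erase s(x, y)) y γ) :
    IsColoring K E (Function.update c s(x, y) γ) := by
  have hmiss : ∀ t ∈ s(x, y), IsMissing c (E.erase s(x, y)) t γ := by
    intro t ht
    rcases Sym2.mem_iff.1 ht with rfl | rfl
    exacts [hx, hy]
  constructor
  · intro e he
    rcases eq_or_ne e s(x, y) with rfl | hne
    · simpa using hγ
    · simpa [hne] using hc.mem_palette e (mem_erase.2 ⟨hne, he⟩)
  · rintro e he f hf ⟨hef, t, hte, htf⟩
    rcases eq_or_ne e s(x, y) with rfl | hne
    · rw [Function.update_self, Function.update_of_ne hef.symm]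
      exact (hmiss t hte f (mem_erase.2 ⟨hef.symm, hf⟩) htf).symm
    rcases eq_or_ne f s(x, y) with rfl | hnf
    · rw [Function.update_self, Function.update_of_ne hef]
      exact hmiss t htf e (mem_erase.2 ⟨hef, he⟩) hte
    rw [Function.update_of_ne hne, Function.update_of_ne hnf]
    exact hc.isProper e (mem_erase.2 ⟨hne, he⟩) f (mem_erase.2 ⟨hnf, hf⟩) ⟨hef, t, hte, htf⟩

/-- A Vizing fan at `u`: `s(u, v)` is the uncoloured edge, and the colour of each later edge
`s(u, b)` is missing at the vertex `a` preceding `b`. -/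
structure IsFan (E : Finset (Sym2 V)) (c : Sym2 V → κ) (u v : V) (L : List V) : Prop where
  nodup : (v :: L).Nodup
  mem : ∀ x ∈ v :: L, s(u, x) ∈ E
  chain : (v :: L).IsChain fun a b => IsMissing c (E.erase s(u, v)) a (c s(u, b))

theorem IsFan.singleton (huv : s(u, v) ∈ E) : IsFan E c u v [] :=
  ⟨List.nodup_singleton v, by simpa using huv, List.isChain_singleton v⟩

theorem IsFan.center_notMem (hE : ∀ e ∈ E, ¬ e.IsDiag) (hF : IsFan E c u v L) : u ∉ v :: L :=
  fun hu => hE _ (hF.mem u hu) (Sym2.mk_isDiag_iff.2 rfl)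

theorem IsFan.concat (hF : IsFan E c u v L) (hw : w ∉ v :: L) (huw : s(u, w) ∈ E)
    (hmiss : IsMissing c (E.erase s(u, v)) ((v :: L).getLast (List.cons_ne_nil _ _))
      (c s(u, w))) :
    IsFan E c u v (L ++ [w]) where
  nodup := by
    rw [← List.cons_append, List.nodup_append]
    exact ⟨hF.nodup, List.nodup_singleton w, fun a ha b hb => by
      rw [List.mem_singleton] at hb; exact hb ▸ fun h => hw (h ▸ ha)⟩
  mem x hx := by
    rw [← List.cons_append, List.mem_append, List.mem_singleton] at hx
    rcases hx with hx | rfl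
    exacts [hF.mem x hx, huw]
  chain := by
    rw [← List.cons_append]
    exact hF.chain.append (List.isChain_singleton w)
      (by simpa [List.getLast?_eq_some_getLast] using hmiss)

/-- Recolour `s(u, v)` with the colour of the next fan edge, which becomes the uncoloured one. -/
theorem IsFan.shift (hF : IsFan E c u v (w :: L)) (hc : IsColoring K (E.erase s(u, v)) c) :
    ∃ c', IsFan E c' u w L ∧ IsColoring K (E.erase s(u, w)) c' ∧
      (∀ x ≠ v, c' s(u, x) = c s(u, x)) ∧
      ∀ x ≠ v, ∀ γ, IsMissing c (E.erase s(u, v)) x γ → IsMissing c' (E.erase s(u, w)) x γ := by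
  obtain ⟨hv, hnodup⟩ := List.nodup_cons.1 hF.nodup
  have hvw : s(u, v) ≠ s(u, w) := fun h => hv (Sym2.congr_right.1 h ▸ List.mem_cons_self ..)
  have hw : s(u, w) ∈ E.erase s(u, v) := mem_erase.2 ⟨hvw.symm, hF.mem w (by simp)⟩
  obtain ⟨hvmiss, hchain⟩ := List.isChain_cons_cons.1 hF.chain
  set c' := Function.update c s(u, v) (c s(u, w))
  have hagree : ∀ x ≠ v, c' s(u, x) = c s(u, x) := fun x hx =>
    Function.update_of_ne (fun h => hx (Sym2.congr_right.1 h)) _ _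
  have hmiss : ∀ x ≠ v, ∀ γ, IsMissing c (E.erase s(u, v)) x γ →
      IsMissing c' (E.erase s(u, w)) x γ := by
    intro x hxv γ hx f hf hxf
    rcases eq_or_ne f s(u, v) with rfl | hfv
    · obtain rfl : x = u := (Sym2.mem_iff.1 hxf).resolve_right hxv
      simp only [c', Function.update_self]
      exact hx _ hw (Sym2.mem_mk_left _ _)
    · simp only [c', Function.update_of_ne hfv]
      exact hx f (mem_erase.2 ⟨hfv, mem_of_mem_erase hf⟩) hxf
  have hc' : IsColoring K (E.erase s(u, w)) c' := by
    refine IsColoring.update ?_ (mem_erase.2 ⟨hvw, hF.mem v (by simp)⟩) (hc.mem_palette _ hw) ?_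
      (hvmiss.mono (erase_subset_erase _ (erase_subset _ _)))
    · exact hc.mono (by rw [erase_right_comm]; exact erase_subset _ _)
    · rw [erase_right_comm]
      exact hc.isProper.isMissing_erase hw (Sym2.mem_mk_left _ _)
  refine ⟨c', ⟨hnodup, fun x hx => hF.mem x (List.mem_cons_of_mem _ hx), ?_⟩, hc', hagree, hmiss⟩
  refine hchain.imp_of_mem_tail_imp fun a b ha hb hab => ?_
  rw [hagree b fun h => hv (h ▸ List.mem_of_mem_tail hb)]
  exact hmiss a (fun h => hv (h ▸ ha)) _ hab

theorem IsFan.rotate (hF : IsFan E c u v L) (hc : IsColoring K (E.erase s(u, v)) c)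
    {P Q : List V} (hL : v :: L = P ++ z :: Q) :
    ∃ c', IsFan E c' u z Q ∧ IsColoring K (E.erase s(u, z)) c' ∧
      (∀ x ∉ P, c' s(u, x) = c s(u, x)) ∧
      ∀ x ∉ P, ∀ γ, IsMissing c (E.erase s(u, v)) x γ → IsMissing c' (E.erase s(u, z)) x γ := by
  induction P generalizing v L c with
  | nil =>
    obtain ⟨rfl, rfl⟩ := List.cons.inj hL
    exact ⟨c, hF, hc, fun _ _ => rfl, fun _ _ _ h => h⟩
  | cons p P ih =>
    obtain ⟨rfl, hLP⟩ := List.cons.inj hL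
    cases L with
    | nil => simp at hLP
    | cons w L =>
      obtain ⟨c₁, hF₁, hc₁, hagree₁, hmiss₁⟩ := hF.shift hc
      obtain ⟨c₂, hF₂, hc₂, hagree₂, hmiss₂⟩ := ih hF₁ hc₁ hLP
      refine ⟨c₂, hF₂, hc₂, fun x hx => ?_, fun x hx γ h => ?_⟩
      · rw [List.mem_cons, not_or] at hx
        rw [hagree₂ x hx.2, hagree₁ x hx.1]
      · rw [List.mem_cons, not_or] at hx
        exact hmiss₂ x hx.2 γ (hmiss₁ x hx.1 γ h)

theorem IsFan.exists_isColoring_of_isMissing (hE : ∀ e ∈ E, ¬ e.IsDiag) (hF : IsFan E c u v L)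
    (hc : IsColoring K (E.erase s(u, v)) c) (hβ : β ∈ K)
    (hu : IsMissing c (E.erase s(u, v)) u β)
    (hy : IsMissing c (E.erase s(u, v)) ((v :: L).getLast (List.cons_ne_nil _ _)) β) :
    ∃ c', IsColoring K E c' := by
  set y := (v :: L).getLast (List.cons_ne_nil _ _)
  have hL : v :: L = (v :: L).dropLast ++ [y] := (List.dropLast_append_getLast _).symm
  have hyP : y ∉ (v :: L).dropLast := fun h =>
    (List.nodup_append.1 (hL ▸ hF.nodup)).2.2 y h y (List.mem_singleton_self y) rfl
  have huP : u ∉ (v :: L).dropLast := fun h =>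
    hF.center_notMem hE (List.mem_of_mem_dropLast h)
  obtain ⟨c', -, hc', -, hmiss⟩ := hF.rotate hc hL
  exact ⟨_, hc'.update (hF.mem y (List.getLast_mem _)) hβ (hmiss u huP β hu) (hmiss y hyP β hy)⟩

variable [Fintype V] [DecidableEq κ]

/-- If the `(α, β)`-chain through `z` avoids `u`, swap it and give `s(u, z)` the colour `α`.
Otherwise the chain through `y` avoids both `u` and `z`: swapping it keeps the fan, and `α` is
then missing at `y` and `u`. -/
theorem IsFan.exists_isColoring_of_kempe (hE : ∀ e ∈ E, ¬ e.IsDiag) {Q : List V}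
    (hF : IsFan E c u z (w :: Q)) (hc : IsColoring K (E.erase s(u, z)) c)
    (hα : α ∈ K) (hβ : β ∈ K) (hu : IsMissing c (E.erase s(u, z)) u α) (hw : c s(u, w) = β)
    (hy : IsMissing c (E.erase s(u, z)) ((w :: Q).getLast (List.cons_ne_nil _ _)) β) :
    ∃ c', IsColoring K E c' := by
  set E₀ := E.erase s(u, z)
  set y := (w :: Q).getLast (List.cons_ne_nil _ _)
  obtain ⟨hzmiss, hchain⟩ := List.isChain_cons_cons.1 hF.chain
  rw [hw] at hzmiss
  obtain ⟨hz, hnodup⟩ := List.nodup_cons.1 hF.nodup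
  have hyw : y ∈ w :: Q := List.getLast_mem _
  have huz : u ≠ z := fun h => hF.center_notMem hE (h ▸ List.mem_cons_self ..)
  have huy : u ≠ y := fun h => hF.center_notMem hE (h ▸ List.mem_cons_of_mem _ hyw)
  have hyz : y ≠ z := fun h => hz (h ▸ hyw)
  by_cases hreach : (kempeGraph E₀ c α β).Reachable u z
  · have hyu : ¬ (kempeGraph E₀ c α β).Reachable y u := fun h =>
      kempeGraph_not_reachable hc.isProper hu hy hzmiss huy huz hyz hreach h.symm
    have hyz' : ¬ (kempeGraph E₀ c α β).Reachable y z := fun h => hyu (h.trans hreach.symm)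
    have hwE₀ : s(u, w) ∈ E₀ :=
      mem_erase.2 ⟨fun h => hz (Sym2.congr_right.1 h ▸ List.mem_cons_self ..), hF.mem w (by simp)⟩
    have hF' : IsFan E (kempeSwap E₀ c α β y) u z (w :: Q) := by
      refine ⟨hF.nodup, hF.mem, List.isChain_cons_cons.2 ⟨?_, ?_⟩⟩
      · rw [kempeSwap_of_not_reachable hwE₀ (Sym2.mem_mk_left _ _) hyu, hw]
        exact hzmiss.kempeSwap_of_not_reachable hyz'
      refine hchain.imp_of_mem_tail_imp fun a b _ hb hab => ?_
      rw [List.tail_cons] at hb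
      have hbE₀ : s(u, b) ∈ E₀ := mem_erase.2
        ⟨fun h => hz (Sym2.congr_right.1 h ▸ List.mem_cons_of_mem _ hb), hF.mem b (by simp [hb])⟩
      have hbα : c s(u, b) ≠ α := hu _ hbE₀ (Sym2.mem_mk_left _ _)
      have hbβ : c s(u, b) ≠ β := hw ▸ hc.isProper _ hbE₀ _ hwE₀
        ⟨fun h => (List.nodup_cons.1 hnodup).1 (Sym2.congr_right.1 h ▸ hb), u,
          Sym2.mem_mk_left _ _, Sym2.mem_mk_left _ _⟩
      rw [kempeSwap_of_ne hbα hbβ]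
      exact hab.kempeSwap_of_ne hbα hbβ
    exact hF'.exists_isColoring_of_isMissing hE (hc.kempeSwap hα hβ) hα
      (hu.kempeSwap_of_not_reachable hyu) hy.kempeSwap_self
  · exact ⟨_, (hc.kempeSwap hα hβ).update (hF.mem z (by simp)) hα
      (hu.kempeSwap_of_not_reachable fun h => hreach h.symm) hzmiss.kempeSwap_self⟩

/-- Rotate the fan up to the predecessor of `w`, which makes `w` the second fan vertex. -/
theorem IsFan.exists_isColoring_of_mem (hE : ∀ e ∈ E, ¬ e.IsDiag)
    (hF : IsFan E c u v L) (hc : IsColoring K (E.erase s(u, v)) c) (hα : α ∈ K) (hβ : β ∈ K)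
    (hu : IsMissing c (E.erase s(u, v)) u α) (hwL : w ∈ L) (hw : c s(u, w) = β)
    (hy : IsMissing c (E.erase s(u, v)) ((v :: L).getLast (List.cons_ne_nil _ _)) β) :
    ∃ c', IsColoring K E c' := by
  obtain ⟨A, B, rfl⟩ := List.append_of_mem hwL
  set P := (v :: A).dropLast
  set z := (v :: A).getLast (List.cons_ne_nil _ _)
  have hL : v :: (A ++ w :: B) = P ++ z :: w :: B := by
    rw [← List.cons_append, ← List.dropLast_append_getLast (List.cons_ne_nil v A),
      List.append_assoc, List.singleton_append]
  have hdisj := (List.nodup_append.1 (hL ▸ hF.nodup)).2.2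
  have hlast : (v :: (A ++ w :: B)).getLast (List.cons_ne_nil _ _) =
      (w :: B).getLast (List.cons_ne_nil _ _) := by
    simp only [← List.cons_append]
    exact List.getLast_append_of_ne_nil _ (List.cons_ne_nil _ _)
  have hwP : w ∉ P := fun h => hdisj w h w (by simp) rfl
  have huP : u ∉ P := fun h => hF.center_notMem hE (hL ▸ List.mem_append_left _ h)
  have hyP : (w :: B).getLast (List.cons_ne_nil _ _) ∉ P := fun h =>
    hdisj _ h _ (List.mem_cons_of_mem _ (List.getLast_mem _)) rfl
  obtain ⟨c', hF', hc', hagree, hmiss⟩ := hF.rotate hc hL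
  exact hF'.exists_isColoring_of_kempe hE hc' hα hβ (hmiss u huP α hu) ((hagree w hwP).trans hw)
    (hmiss _ hyP β (hlast ▸ hy))

/-- Vizing's argument: grow the fan until the colour missing at its last vertex is missing at `u`
too, or already occurs on a fan edge; the fan cannot outgrow `V`. -/
theorem IsFan.exists_isColoring {L : List V} (hE : ∀ e ∈ E, ¬ e.IsDiag)
    (hN : ∀ w, s(u, w) ∈ E → #{e ∈ E | w ∈ e} < #K) (hF : IsFan E c u v L)
    (hc : IsColoring K (E.erase s(u, v)) c) (hα : α ∈ K)
    (hu : IsMissing c (E.erase s(u, v)) u α) : ∃ c', IsColoring K E c' := by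
  set y := (v :: L).getLast (List.cons_ne_nil _ _)
  obtain ⟨β, hβ, hy⟩ := exists_isMissing (c := c) ((card_le_card
    (filter_subset_filter _ (erase_subset _ _))).trans_lt (hN y (hF.mem y (List.getLast_mem _))))
  by_cases hβu : IsMissing c (E.erase s(u, v)) u β
  · exact hF.exists_isColoring_of_isMissing hE hc hβ hβu hy
  obtain ⟨f, hf, huf, hcf⟩ : ∃ f ∈ E.erase s(u, v), u ∈ f ∧ c f = β := by
    simpa [IsMissing, and_assoc] using hβu
  obtain ⟨w, rfl⟩ := Sym2.mem_iff_exists.1 huf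
  by_cases hw : w ∈ v :: L
  · have hwv : w ≠ v := fun h => ne_of_mem_erase hf (h ▸ rfl)
    exact hF.exists_isColoring_of_mem hE hc hα hβ hu ((List.mem_cons.1 hw).resolve_left hwv)
      hcf hy
  have hF' := hF.concat hw (mem_of_mem_erase hf) (hcf ▸ hy)
  have hlen := hF'.nodup.length_le_card
  exact hF'.exists_isColoring hE hN hc hα hu
termination_by Fintype.card V - L.length
decreasing_by
  simp only [List.length_append, List.length_cons, List.length_nil] at hlen ⊢
  omega

theorem exists_isColoring_of_erase (hE : ∀ e ∈ E, ¬ e.IsDiag)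
    (huv : s(u, v) ∈ E) (hc : IsColoring K (E.erase s(u, v)) c) (hu : #{e ∈ E | u ∈ e} ≤ #K)
    (hN : ∀ w, s(u, w) ∈ E → #{e ∈ E | w ∈ e} < #K) : ∃ c', IsColoring K E c' := by
  have huv' : s(u, v) ∈ {e ∈ E | u ∈ e} := mem_filter.2 ⟨huv, Sym2.mem_mk_left _ _⟩
  obtain ⟨α, hα, hαu⟩ := exists_isMissing (c := c) (K := K) (E := E.erase s(u, v)) (x := u) (by
    have := card_pos.2 ⟨_, huv'⟩
    rw [filter_erase, card_erase_of_mem huv']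
    omega)
  exact (IsFan.singleton huv).exists_isColoring hE hN hc hα hαu

/-- Fournier's theorem: `hlt` says that the vertices of degree `#K` are independent. -/
theorem exists_isColoring [Nonempty κ] (hE : ∀ e ∈ E, ¬ e.IsDiag)
    (hmax : ∀ x, #{e ∈ E | x ∈ e} ≤ #K) (hlt : ∀ e ∈ E, ∃ x ∈ e, #{f ∈ E | x ∈ f} < #K) :
    ∃ c, IsColoring K E c := by
  induction E using Finset.strongInduction with
  | H E ih =>
  rcases E.eq_empty_or_nonempty with rfl | hne
  · exact ⟨fun _ => Classical.arbitrary κ, by simp, by simp [IsProper]⟩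
  obtain ⟨u, v, huv, hN⟩ := exists_edge_forall_neighbor hne hlt
  have hdeg : ∀ x, #{e ∈ E.erase s(u, v) | x ∈ e} ≤ #{e ∈ E | x ∈ e} := fun x =>
    card_le_card (filter_subset_filter _ (erase_subset _ _))
  obtain ⟨c, hc⟩ := ih _ (erase_ssubset huv) (fun e he => hE e (mem_of_mem_erase he))
    (fun x => (hdeg x).trans (hmax x))
    (fun e he => (hlt e (mem_of_mem_erase he)).imp fun x hx => ⟨hx.1, (hdeg x).trans_lt hx.2⟩)
  exact exists_isColoring_of_erase hE huv hc (hmax u) hN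

end EdgeColoring

/-- The `μ = 1` case of Fournier's theorem: if `M` is a maximal matching of a
simple graph `G` with maximum degree `Δ`, then `G \ M` has a proper
edge-colouring with colours from `{1, …, Δ}`. -/
theorem fournier_simple {V : Type} [Fintype V] [DecidableEq V] (G : SimpleGraph V)
    [DecidableRel G.Adj] (Δ : ℕ) (hΔ : ∀ v, G.degree v ≤ Δ)
    (M : Set (Sym2 V)) (hM : G.IsMatchingSet M)
    (hmax : ∀ f ∈ G.edgeSet, f ∉ M → ∃ e ∈ M, EdgeAdj e f) :
    ∃ c : Sym2 V → ℕ, G.IsProperEC M Δ c := by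
  classical
  set E : Finset (Sym2 V) := {e ∈ G.edgeFinset | e ∉ M}
  have hmem : ∀ {e}, e ∈ E ↔ e ∈ G.edgeSet ∧ e ∉ M := by simp [E]
  have hsub : ∀ x, {e ∈ E | x ∈ e} ⊆ G.incidenceFinset x := fun x => by
    rw [incidenceFinset_eq_filter]
    exact filter_subset_filter _ (filter_subset _ _)
  have hlt : ∀ e ∈ E, ∃ x ∈ e, #{f ∈ E | x ∈ f} < Δ := by
    intro e he
    obtain ⟨m, hm, -, x, hxm, hxe⟩ := hmax e (hmem.1 he).1 (hmem.1 he).2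
    have hm' : m ∈ G.incidenceFinset x := by
      simpa [incidenceFinset_eq_filter] using ⟨hM.1 hm, hxm⟩
    refine ⟨x, hxe, lt_of_lt_of_le ?_ ((card_incidenceFinset_eq_degree G x).trans_le (hΔ x))⟩
    exact card_lt_card ((ssubset_iff_of_subset (hsub x)).2
      ⟨m, hm', fun h => (hmem.1 (mem_filter.1 h).1).2 hm⟩)
  obtain ⟨c, hc⟩ := EdgeColoring.exists_isColoring (K := Finset.Icc 1 Δ)
    (fun e he => G.not_isDiag_of_mem_edgeSet (hmem.1 he).1)
    (fun x => by simpa using ((card_le_card (hsub x)).trans_eq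
      (card_incidenceFinset_eq_degree G x)).trans (hΔ x))
    (by simpa using hlt)
  exact ⟨c, fun e he heM => hc.mem_palette e (hmem.2 ⟨he, heM⟩),
    fun e he f hf heM hfM => hc.isProper e (hmem.2 ⟨he, heM⟩) f (hmem.2 ⟨hf, hfM⟩)⟩
end

section
/- Let G be a multigraph, M a matching of G whose edges are pairwise at distance at least 9, Φ : M → {1, …, Δ + μ} a precolouring, M′ ⊇ M a matching, and φ a proper (Δ + μ − 1)-edge-colouring of G \ M′. Suppose that for every i ∈ {1, …, Δ + μ − 1}, every edge of the alternating structure A_i (the union over endpoints u of edges of M_i of the maximal path from u alternating between φ-colour-i edges and edges of M′ \ M) lies within distance 3 of some edge of M_i. Then Φ extends to a proper (Δ + μ)-edge-colouring of G. -/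
open Finset

namespace Multigraph

variable {V E : Type} [Fintype V] [Fintype E] [DecidableEq V] [DecidableEq E]

/-- Colour `c` is missing at the vertex `v`, where `φ` colours the edges
outside `D` from `{1, …, k}`. -/
def MissingAt (G : Multigraph V E) (D : Finset E) (φ : E → ℕ) (k : ℕ) (v : V) (c : ℕ) : Prop :=
  c ∈ Finset.Icc 1 k ∧ ∀ g, g ∉ D → v ∈ G.ends g → φ g ≠ c

/-- A multi-fan `(f₁, x₁, …, f_p, x_p)` at `z` with respect to the edge
`e = f₁` and the colouring `φ` of the edges outside `D`. -/
structure IsMultiFan (G : Multigraph V E) (D : Finset E) (φ : E → ℕ) (k : ℕ)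
    (z : V) (e : E) (p : ℕ) (f : Fin p → E) (x : Fin p → V) : Prop where
  pos : 0 < p
  inj : Function.Injective f
  first : f ⟨0, pos⟩ = e
  ends_eq : ∀ i, G.ends (f i) = s(z, x i)
  coloured : ∀ i : Fin p, i.val ≠ 0 → f i ∉ D
  missing : ∀ i : Fin p, i.val ≠ 0 →
    ∃ j : Fin p, j.val < i.val ∧ G.MissingAt D φ k (x j) (φ (f i))

/-- A maximal multi-fan: it cannot be extended by any further coloured edge
at `z`. -/
def IsMaximalMultiFan (G : Multigraph V E) (D : Finset E) (φ : E → ℕ) (k : ℕ)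
    (z : V) (e : E) (p : ℕ) (f : Fin p → E) (x : Fin p → V) : Prop :=
  G.IsMultiFan D φ k z e p f x ∧
    ∀ g, g ∉ D → g ∉ Set.range f → z ∈ G.ends g →
      ¬ ∃ j : Fin p, G.MissingAt D φ k (x j) (φ g)

/-- A path starting at `u` that alternates between edges `φ`-coloured `i`
and edges of `M' \ M`. -/
def IsAltPath (G : Multigraph V E) (M M' : Finset E) (φ : E → ℕ) (i : ℕ) (u : V)
    (n : ℕ) (w : Fin (n + 1) → V) (g : Fin n → E) : Prop :=
  w 0 = u ∧ Function.Injective w ∧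
    (∀ k : Fin n, G.ends (g k) = s(w k.castSucc, w k.succ)) ∧
    ∀ k : Fin n, if Even k.val then g k ∉ M' ∧ φ (g k) = i else g k ∈ M' \ M

/-- The maximal alternating path starting at `u` contains more than one edge,
i.e. there is an alternating path from `u` with at least two edges. -/
def LongAlt (G : Multigraph V E) (M M' : Finset E) (φ : E → ℕ) (i : ℕ) (u : V) : Prop :=
  ∃ (n : ℕ) (w : Fin (n + 1) → V) (g : Fin n → E),
    G.IsAltPath M M' φ i u n w g ∧ 2 ≤ n

/-- The set `A_i`: all edges lying on an alternating path starting at an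
endpoint of an edge of `M` precoloured `i`. -/
def AltSet (G : Multigraph V E) (M M' : Finset E) (φ Φ : E → ℕ) (i : ℕ) : Set E :=
  {a | ∃ e ∈ M, Φ e = i ∧ ∃ u ∈ G.ends e, ∃ (n : ℕ) (w : Fin (n + 1) → V)
    (g : Fin n → E) (k : Fin n), G.IsAltPath M M' φ i u n w g ∧ g k = a}

/-- An edge `e ∈ M` is bad with respect to `(M', φ)`: there is a path
`e, e₁, e₂` with `φ e₁ = Φ e` and `e₂ ∈ M' \ M`. -/
def IsBadEdge (G : Multigraph V E) (M M' : Finset E) (Φ φ : E → ℕ) (e : E) : Prop :=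
  e ∈ M ∧ ∃ e₁ e₂, G.EdgeAdj e e₁ ∧ G.EdgeAdj e₁ e₂ ∧ e₁ ∉ M' ∧
    φ e₁ = Φ e ∧ e₂ ∈ M' \ M

end Multigraph

/-! Colour `M` by `Φ`, each edge of `A_i ∩ M'` by `i`, each edge of `A_i \ M'` by the new
colour `Δ + μ`, the remaining edges of `M' \ M` by `Δ + μ` too, and keep `φ` elsewhere.
An alternating path can always be continued through an edge of the right kind at its last
vertex, and at its other vertices that edge is already on it; hence a `φ`-edge of colour `i`
meeting `A_i ∩ M'`, or an edge of `M' \ M` meeting `A_i \ M'`, lies in `A_i`. Since `A_i`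
stays within distance `3` of `M_i` while distinct edges of `M` are at distance at least `9`,
no edge of `A_i` meets an edge of `A_j` (`j ≠ i`) or an edge of `M` precoloured `j ≠ i`.
These facts rule out every conflict of the new colouring. -/

namespace Multigraph

variable {V E : Type} {G : Multigraph V E}

theorem exists_ends_eq_of_mem {e : E} {v : V} (hv : v ∈ G.ends e) :
    ∃ x, x ≠ v ∧ G.ends e = s(v, x) := by
  obtain ⟨x, hx⟩ := Sym2.mem_iff_exists.mp hv
  refine ⟨x, fun h => G.loopless e ?_, hx⟩
  simp [hx, h]

theorem one_le_multiplicity [Finite E] (e : E) : 1 ≤ G.multiplicity (G.ends e) :=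
  (Set.ncard_pos (Set.toFinite _)).2 ⟨e, rfl⟩

theorem exists_walk_length_le_one {e : E} {u v : V} (hu : u ∈ G.ends e) (hv : v ∈ G.ends e) :
    ∃ p : G.toSimple.Walk u v, p.length ≤ 1 := by
  by_cases h : u = v
  · subst h
    exact ⟨.nil, zero_le_one⟩
  · have hadj : G.toSimple.Adj u v := ⟨h, e, (Sym2.mem_and_mem_iff h).1 ⟨hu, hv⟩⟩
    exact ⟨hadj.toWalk, le_rfl⟩

theorem edgeDistLe_zero {a b : E} {v : V} (ha : v ∈ G.ends a) (hb : v ∈ G.ends b) :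
    G.EdgeDistLe a b 0 :=
  ⟨v, v, ha, hb, .nil, le_rfl⟩

theorem EdgeDistLe.symm {a b : E} {d : ℕ} (h : G.EdgeDistLe a b d) : G.EdgeDistLe b a d := by
  obtain ⟨u, v, hu, hv, p, hp⟩ := h
  exact ⟨v, u, hv, hu, p.reverse, by simpa using hp⟩

/-- The `1` accounts for crossing the middle edge `b`. -/
theorem EdgeDistLe.trans {a b c : E} {d₁ d₂ : ℕ} (hab : G.EdgeDistLe a b d₁)
    (hbc : G.EdgeDistLe b c d₂) : G.EdgeDistLe a c (d₁ + 1 + d₂) := by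
  obtain ⟨u, v, hu, hv, p, hp⟩ := hab
  obtain ⟨v', w, hv', hw, q, hq⟩ := hbc
  obtain ⟨r, hr⟩ := exists_walk_length_le_one hv hv'
  refine ⟨u, w, hu, hw, (p.append r).append q, ?_⟩
  simp only [SimpleGraph.Walk.length_append]
  omega

theorem EdgeDistGe.le {a b : E} {d d' : ℕ} (hge : G.EdgeDistGe a b d)
    (hle : G.EdgeDistLe a b d') : d ≤ d' := by
  obtain ⟨u, v, hu, hv, p, hp⟩ := hle
  exact (hge u v hu hv p).trans hp

theorem eq_of_edgeDistLe {M : Finset E} (hdist : ∀ e ∈ M, ∀ f ∈ M, e ≠ f → G.EdgeDistGe e f 9)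
    {e f : E} (he : e ∈ M) (hf : f ∈ M) {d : ℕ} (h : G.EdgeDistLe e f d) (hd : d < 9) :
    e = f := by
  by_contra hne
  exact absurd ((hdist e he f hf hne).le h) (not_le.2 hd)

variable [DecidableEq E] {M M' : Finset E} {φ Φ : E → ℕ} {i k : ℕ}

/-- The condition that `IsAltPath` imposes on the edge of index `k`. -/
def AltEdge (M M' : Finset E) (φ : E → ℕ) (i k : ℕ) (b : E) : Prop :=
  if Even k then b ∉ M' ∧ φ b = i else b ∈ M' \ M

theorem altEdge_iff_of_even_iff {l : ℕ} (h : Even k ↔ Even l) {b : E} :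
    AltEdge M M' φ i k b ↔ AltEdge M M' φ i l b := by
  simp only [AltEdge, h]

theorem AltEdge.even_iff {b : E} (h : AltEdge M M' φ i k b) : Even k ↔ b ∉ M' := by
  unfold AltEdge at h
  split_ifs at h with hk
  · exact iff_of_true hk h.1
  · exact iff_of_false hk (not_not.2 (mem_sdiff.1 h).1)

theorem altEdge_of_notMem {b : E} (hk : Even k) (hb : b ∉ M') (hφb : φ b = i) :
    AltEdge M M' φ i k b := by
  rw [AltEdge, if_pos hk]
  exact ⟨hb, hφb⟩

theorem altEdge_of_mem_sdiff {b : E} (hk : ¬ Even k) (hb : b ∈ M' \ M) :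
    AltEdge M M' φ i k b := by
  rw [AltEdge, if_neg hk]
  exact hb

theorem AltEdge.eq_of_mem_ends (hM' : G.IsMatching M')
    (hφ : ∀ e f, e ∉ M' → f ∉ M' → G.EdgeAdj e f → φ e ≠ φ f) {b b' : E} {v : V}
    (hb : AltEdge M M' φ i k b) (hb' : AltEdge M M' φ i k b') (hvb : v ∈ G.ends b)
    (hvb' : v ∈ G.ends b') : b = b' := by
  by_contra hne
  have hadj : G.EdgeAdj b b' := ⟨hne, v, hvb, hvb'⟩
  unfold AltEdge at hb hb'
  split_ifs at hb hb'
  · exact hφ b b' hb.1 hb'.1 hadj (hb.2.trans hb'.2.symm)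
  · exact hM' b (mem_sdiff.1 hb).1 b' (mem_sdiff.1 hb').1 hne hadj

def OnAltPath (G : Multigraph V E) (M M' : Finset E) (φ : E → ℕ) (i : ℕ) (u : V) (b : E) :
    Prop :=
  ∃ (n : ℕ) (w : Fin (n + 1) → V) (g : Fin n → E) (t : Fin n),
    G.IsAltPath M M' φ i u n w g ∧ g t = b

section AltPath

variable {u : V} {n : ℕ} {w : Fin (n + 1) → V} {g : Fin n → E}

theorem isAltPath_nil (u : V) : G.IsAltPath M M' φ i u 0 (fun _ => u) Fin.elim0 :=
  ⟨rfl, fun _ _ _ => Fin.ext (by omega), fun k => k.elim0, fun k => k.elim0⟩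

theorem IsAltPath.ends_eq (hP : G.IsAltPath M M' φ i u n w g) (t : Fin n) :
    G.ends (g t) = s(w t.castSucc, w t.succ) :=
  hP.2.2.1 t

theorem IsAltPath.altEdge (hP : G.IsAltPath M M' φ i u n w g) (t : Fin n) :
    AltEdge M M' φ i t (g t) :=
  hP.2.2.2 t

theorem IsAltPath.snoc (hP : G.IsAltPath M M' φ i u n w g) {b : E} {x : V}
    (hx : x ∉ Set.range w) (hb : G.ends b = s(w (Fin.last n), x))
    (hbn : AltEdge M M' φ i n b) :
    G.IsAltPath M M' φ i u (n + 1) (Fin.snoc w x) (Fin.snoc g b) := by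
  obtain ⟨h0, hinj, hends, hpar⟩ := hP
  refine ⟨?_, Fin.snoc_injective_of_injective hinj hx, fun k => ?_, fun k => ?_⟩
  · rw [← Fin.castSucc_zero, Fin.snoc_castSucc, h0]
  · induction k using Fin.lastCases with
    | last => rwa [Fin.snoc_last, Fin.succ_last, Fin.snoc_last, Fin.snoc_castSucc]
    | cast j =>
      rw [Fin.snoc_castSucc, Fin.snoc_castSucc, Fin.succ_castSucc, Fin.snoc_castSucc]
      exact hends j
  · induction k using Fin.lastCases with
    | last => rw [Fin.snoc_last, Fin.val_last]; exact hbn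
    | cast j => rw [Fin.snoc_castSucc, Fin.val_castSucc]; exact hpar j

theorem IsAltPath.exists_eq_of_mem_ends (hP : G.IsAltPath M M' φ i u n w g)
    (hM' : G.IsMatching M') (hφ : ∀ e f, e ∉ M' → f ∉ M' → G.EdgeAdj e f → φ e ≠ φ f)
    (hu : ∀ b ∈ M' \ M, u ∉ G.ends b) {q : ℕ} {b : E} (hb : AltEdge M M' φ i q b)
    (j : Fin (n + 1)) (hj : j.val < n) (hjb : w j ∈ G.ends b) : ∃ t, g t = b := by
  -- `b` is the path edge of its kind at `w j`: `g j` or `g (j - 1)`; at `j = 0` only the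
  -- kind of `g 0` can occur, by `hu`.
  by_cases hq : Even j.val ↔ Even q
  · have hjt : (⟨j, hj⟩ : Fin n).castSucc = j := rfl
    refine ⟨⟨j, hj⟩, AltEdge.eq_of_mem_ends hM' hφ
      ((altEdge_iff_of_even_iff hq).1 (hP.altEdge ⟨j, hj⟩)) hb ?_ hjb⟩
    rw [hP.ends_eq, hjt]
    exact Sym2.mem_mk_left _ _
  · have hj0 : j.val ≠ 0 := by
      intro hj0
      have hq' : ¬ Even q := by simpa [hj0] using hq
      unfold AltEdge at hb
      rw [if_neg hq'] at hb
      rw [show j = 0 from Fin.ext hj0, hP.1] at hjb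
      exact hu b hb hjb
    set t : Fin n := ⟨j - 1, by omega⟩
    have hjt : t.succ = j := Fin.ext (by simp [t]; omega)
    have htj : Even j.val ↔ ¬ Even t.val := by
      rw [← Nat.even_add_one, ← Fin.val_succ, hjt]
    refine ⟨t, AltEdge.eq_of_mem_ends hM' hφ
      ((altEdge_iff_of_even_iff (by tauto)).1 (hP.altEdge t)) hb ?_ hjb⟩
    rw [hP.ends_eq, hjt]
    exact Sym2.mem_mk_right _ _

theorem IsAltPath.onAltPath_of_mem_ends (hP : G.IsAltPath M M' φ i u n w g)
    (hM' : G.IsMatching M') (hφ : ∀ e f, e ∉ M' → f ∉ M' → G.EdgeAdj e f → φ e ≠ φ f)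
    (hu : ∀ b ∈ M' \ M, u ∉ G.ends b) (t : Fin n) {b : E} {v : V}
    (hb : AltEdge M M' φ i (t + 1) b) (hvt : v ∈ G.ends (g t)) (hvb : v ∈ G.ends b) :
    G.OnAltPath M M' φ i u b := by
  have on_path : ∀ j : Fin (n + 1), j.val < n → w j ∈ G.ends b → G.OnAltPath M M' φ i u b := by
    intro j hj hjb
    obtain ⟨s, hs⟩ := hP.exists_eq_of_mem_ends hM' hφ hu hb j hj hjb
    exact ⟨n, w, g, s, hP, hs⟩
  rw [hP.ends_eq t, Sym2.mem_iff] at hvt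
  rcases hvt with rfl | rfl
  · exact on_path t.castSucc t.isLt hvb
  by_cases htn : t.val + 1 < n
  · exact on_path t.succ htn hvb
  obtain ⟨x, hxv, hbx⟩ := exists_ends_eq_of_mem hvb
  by_cases hx : x ∈ Set.range w
  · obtain ⟨j, rfl⟩ := hx
    refine on_path j ?_ (hbx ▸ Sym2.mem_mk_right _ _)
    by_contra hjn
    exact hxv (congrArg w (Fin.ext (by simp; omega)))
  · have hn : t.val + 1 = n := by omega
    rw [show t.succ = Fin.last n from Fin.ext (by simpa using hn)] at hbx
    refine ⟨n + 1, _, _, Fin.last n, hP.snoc hx hbx ?_, Fin.snoc_last _ _⟩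
    rwa [hn] at hb

end AltPath

theorem mem_altSet_of_mem_ends (hMM' : M ⊆ M') (hM' : G.IsMatching M')
    (hφ : ∀ e f, e ∉ M' → f ∉ M' → G.EdgeAdj e f → φ e ≠ φ f) {a b : E} {v : V}
    (ha : a ∈ G.AltSet M M' φ Φ i) (hak : AltEdge M M' φ i k a)
    (hbk : AltEdge M M' φ i (k + 1) b) (hva : v ∈ G.ends a) (hvb : v ∈ G.ends b) :
    b ∈ G.AltSet M M' φ Φ i := by
  obtain ⟨e, he, hΦe, u, hue, n, w, g, t, hP, rfl⟩ := ha
  have hu : ∀ b ∈ M' \ M, u ∉ G.ends b := by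
    intro b hb hub
    have hne : e ≠ b := by
      rintro rfl
      exact (mem_sdiff.1 hb).2 he
    exact hM' e (hMM' he) b (mem_sdiff.1 hb).1 hne ⟨hne, u, hue, hub⟩
  have hkt : Even k ↔ Even t.val := hak.even_iff.trans (hP.altEdge t).even_iff.symm
  have hbt : AltEdge M M' φ i (t + 1) b :=
    (altEdge_iff_of_even_iff (by simp only [Nat.even_add_one, hkt])).1 hbk
  exact ⟨e, he, hΦe, u, hue, hP.onAltPath_of_mem_ends hM' hφ hu t hbt hva hvb⟩

theorem mem_altSet_of_mem_ends_precoloured {e b : E} {v : V} (he : e ∈ M) (hΦe : Φ e = i)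
    (hb : b ∉ M') (hφb : φ b = i) (hve : v ∈ G.ends e) (hvb : v ∈ G.ends b) :
    b ∈ G.AltSet M M' φ Φ i := by
  obtain ⟨x, hxv, hbx⟩ := exists_ends_eq_of_mem hvb
  have hP : G.IsAltPath M M' φ i v 1 _ _ := (isAltPath_nil v).snoc
    (by rintro ⟨_, rfl⟩; exact hxv rfl) hbx (altEdge_of_notMem Even.zero hb hφb)
  exact ⟨e, he, hΦe, v, hve, 1, _, _, Fin.last 0, hP, Fin.snoc_last _ _⟩

theorem precolour_eq_of_mem_altSet (hdist : ∀ e ∈ M, ∀ f ∈ M, e ≠ f → G.EdgeDistGe e f 9)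
    (hA : ∀ i ∈ Icc 1 k, ∀ a ∈ G.AltSet M M' φ Φ i, ∃ e ∈ M, Φ e = i ∧ G.EdgeDistLe a e 3)
    {i : ℕ} (hi : i ∈ Icc 1 k) {a e : E} {v : V} (ha : a ∈ G.AltSet M M' φ Φ i) (he : e ∈ M)
    (hva : v ∈ G.ends a) (hve : v ∈ G.ends e) : Φ e = i := by
  obtain ⟨e', he', rfl, hae'⟩ := hA i hi a ha
  rw [eq_of_edgeDistLe hdist he he' ((edgeDistLe_zero hve hva).trans hae') (by norm_num)]

theorem eq_of_mem_altSet_of_mem_ends (hdist : ∀ e ∈ M, ∀ f ∈ M, e ≠ f → G.EdgeDistGe e f 9)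
    (hA : ∀ i ∈ Icc 1 k, ∀ a ∈ G.AltSet M M' φ Φ i, ∃ e ∈ M, Φ e = i ∧ G.EdgeDistLe a e 3)
    {i j : ℕ} (hi : i ∈ Icc 1 k) (hj : j ∈ Icc 1 k) {a b : E} {v : V}
    (ha : a ∈ G.AltSet M M' φ Φ i) (hb : b ∈ G.AltSet M M' φ Φ j) (hva : v ∈ G.ends a)
    (hvb : v ∈ G.ends b) : i = j := by
  obtain ⟨e, he, rfl, hae⟩ := hA i hi a ha
  obtain ⟨f, hf, rfl, hbf⟩ := hA j hj b hb
  rw [eq_of_edgeDistLe hdist he hf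
    ((hae.symm.trans (edgeDistLe_zero hva hvb)).trans hbf) (by norm_num)]

open Classical in
/-- The paper's extension of `Φ`, with `k + 1` as the new colour `Δ + μ`. -/
noncomputable def extendColouring (G : Multigraph V E) (M M' : Finset E) (φ Φ : E → ℕ) (k : ℕ)
    (e : E) : ℕ :=
  if e ∈ M then Φ e
  else if e ∈ M' then
    if h : ∃ j ∈ Icc 1 k, e ∈ G.AltSet M M' φ Φ j then h.choose else k + 1
  else if e ∈ G.AltSet M M' φ Φ (φ e) then k + 1 else φ e

theorem extendColouring_of_mem {e : E} (he : e ∈ M) :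
    G.extendColouring M M' φ Φ k e = Φ e :=
  if_pos he

theorem extendColouring_of_mem_sdiff {e : E} (he : e ∈ M' \ M) :
    (G.extendColouring M M' φ Φ k e ∈ Icc 1 k ∧
        e ∈ G.AltSet M M' φ Φ (G.extendColouring M M' φ Φ k e)) ∨
      (G.extendColouring M M' φ Φ k e = k + 1 ∧ ∀ j ∈ Icc 1 k, e ∉ G.AltSet M M' φ Φ j) := by
  obtain ⟨heM', heM⟩ := mem_sdiff.1 he
  unfold extendColouring
  rw [if_neg heM, if_pos heM']
  split_ifs with h
  · exact Or.inl h.choose_spec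
  · push Not at h
    exact Or.inr ⟨rfl, h⟩

theorem extendColouring_of_notMem (hMM' : M ⊆ M') {e : E} (he : e ∉ M') :
    (e ∈ G.AltSet M M' φ Φ (φ e) ∧ G.extendColouring M M' φ Φ k e = k + 1) ∨
      (e ∉ G.AltSet M M' φ Φ (φ e) ∧ G.extendColouring M M' φ Φ k e = φ e) := by
  unfold extendColouring
  rw [if_neg (fun heM => he (hMM' heM)), if_neg he]
  by_cases heA : e ∈ G.AltSet M M' φ Φ (φ e)
  · exact Or.inl ⟨heA, if_pos heA⟩
  · exact Or.inr ⟨heA, if_neg heA⟩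

theorem extendColouring_mem_Icc (hMM' : M ⊆ M') (hΦ : ∀ e ∈ M, Φ e ∈ Icc 1 (k + 1))
    (hφ : ∀ e, e ∉ M' → φ e ∈ Icc 1 k) (e : E) :
    G.extendColouring M M' φ Φ k e ∈ Icc 1 (k + 1) := by
  have hk : Icc 1 k ⊆ Icc 1 (k + 1) := Icc_subset_Icc_right k.le_succ
  by_cases heM : e ∈ M
  · rw [extendColouring_of_mem heM]
    exact hΦ e heM
  by_cases heM' : e ∈ M'
  · rcases extendColouring_of_mem_sdiff (mem_sdiff.2 ⟨heM', heM⟩) with ⟨h, -⟩ | ⟨h, -⟩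
    · exact hk h
    · simp [h]
  · rcases extendColouring_of_notMem hMM' heM' with ⟨-, h⟩ | ⟨-, h⟩ <;> rw [h]
    · simp
    · exact hk (hφ e heM')

theorem extendColouring_ne_of_mem_of_notMem (hMM' : M ⊆ M') (hφ : G.IsProperOff M' k φ)
    (hdist : ∀ e ∈ M, ∀ f ∈ M, e ≠ f → G.EdgeDistGe e f 9)
    (hA : ∀ i ∈ Icc 1 k, ∀ a ∈ G.AltSet M M' φ Φ i, ∃ e ∈ M, Φ e = i ∧ G.EdgeDistLe a e 3)
    {e f : E} {v : V} (he : e ∈ M) (hf : f ∉ M') (hve : v ∈ G.ends e) (hvf : v ∈ G.ends f) :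
    G.extendColouring M M' φ Φ k e ≠ G.extendColouring M M' φ Φ k f := by
  have hfk := mem_Icc.1 (hφ.1 f hf)
  rw [extendColouring_of_mem he]
  rcases extendColouring_of_notMem hMM' hf with ⟨hfA, hcf⟩ | ⟨hfA, hcf⟩ <;> rw [hcf]
  · rw [precolour_eq_of_mem_altSet hdist hA (hφ.1 f hf) hfA he hvf hve]
    omega
  · exact fun h => hfA (mem_altSet_of_mem_ends_precoloured he h hf rfl hve hvf)

theorem extendColouring_ne_of_mem_sdiff_of_notMem (hMM' : M ⊆ M') (hM' : G.IsMatching M')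
    (hφ : G.IsProperOff M' k φ) {e f : E} {v : V} (he : e ∈ M' \ M) (hf : f ∉ M')
    (hve : v ∈ G.ends e) (hvf : v ∈ G.ends f) :
    G.extendColouring M M' φ Φ k e ≠ G.extendColouring M M' φ Φ k f := by
  have hfk := mem_Icc.1 (hφ.1 f hf)
  rcases extendColouring_of_notMem hMM' hf with ⟨hfA, hcf⟩ | ⟨hfA, hcf⟩ <;> rw [hcf]
  · have heA : e ∈ G.AltSet M M' φ Φ (φ f) :=
      mem_altSet_of_mem_ends (k := 0) hMM' hM' hφ.2 hfA (altEdge_of_notMem Even.zero hf rfl)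
        (altEdge_of_mem_sdiff (by decide) he) hvf hve
    rcases extendColouring_of_mem_sdiff (G := G) (φ := φ) (Φ := Φ) (k := k) he with
      ⟨hce, -⟩ | ⟨-, hnA⟩
    · have := (mem_Icc.1 hce).2
      omega
    · exact absurd heA (hnA _ (hφ.1 f hf))
  · rcases extendColouring_of_mem_sdiff (G := G) (φ := φ) (Φ := Φ) (k := k) he with
      ⟨-, heA⟩ | ⟨hce, -⟩
    · intro h
      rw [h] at heA
      exact hfA (mem_altSet_of_mem_ends (k := 1) hMM' hM' hφ.2 heA
        (altEdge_of_mem_sdiff (by decide) he) (altEdge_of_notMem (by decide) hf rfl) hve hvf)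
    · omega

theorem extendColouring_ne_of_notMem (hMM' : M ⊆ M') (hφ : G.IsProperOff M' k φ)
    (hdist : ∀ e ∈ M, ∀ f ∈ M, e ≠ f → G.EdgeDistGe e f 9)
    (hA : ∀ i ∈ Icc 1 k, ∀ a ∈ G.AltSet M M' φ Φ i, ∃ e ∈ M, Φ e = i ∧ G.EdgeDistLe a e 3)
    {e f : E} (hadj : G.EdgeAdj e f) (he : e ∉ M') (hf : f ∉ M') :
    G.extendColouring M M' φ Φ k e ≠ G.extendColouring M M' φ Φ k f := by
  have hφef := hφ.2 e f he hf hadj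
  obtain ⟨-, v, hve, hvf⟩ := hadj
  have hek := mem_Icc.1 (hφ.1 e he)
  have hfk := mem_Icc.1 (hφ.1 f hf)
  rcases extendColouring_of_notMem hMM' he with ⟨heA, hce⟩ | ⟨-, hce⟩ <;>
    rcases extendColouring_of_notMem hMM' hf with ⟨hfA, hcf⟩ | ⟨-, hcf⟩ <;> rw [hce, hcf]
  · exact fun _ => hφef
      (eq_of_mem_altSet_of_mem_ends hdist hA (hφ.1 e he) (hφ.1 f hf) heA hfA hve hvf)
  · omega
  · omega
  · exact hφef

theorem extendColouring_ne (hMM' : M ⊆ M') (hM' : G.IsMatching M') (hφ : G.IsProperOff M' k φ)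
    (hdist : ∀ e ∈ M, ∀ f ∈ M, e ≠ f → G.EdgeDistGe e f 9)
    (hA : ∀ i ∈ Icc 1 k, ∀ a ∈ G.AltSet M M' φ Φ i, ∃ e ∈ M, Φ e = i ∧ G.EdgeDistLe a e 3)
    {e f : E} (hadj : G.EdgeAdj e f) :
    G.extendColouring M M' φ Φ k e ≠ G.extendColouring M M' φ Φ k f := by
  suffices key : ∀ e f : E, ∀ v, e ∈ M' → f ∉ M' → v ∈ G.ends e → v ∈ G.ends f →
      G.extendColouring M M' φ Φ k e ≠ G.extendColouring M M' φ Φ k f by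
    have ⟨hne, v, hve, hvf⟩ := hadj
    by_cases he : e ∈ M' <;> by_cases hf : f ∈ M'
    · exact absurd hadj (hM' e he f hf hne)
    · exact key e f v he hf hve hvf
    · exact (key f e v hf he hvf hve).symm
    · exact extendColouring_ne_of_notMem hMM' hφ hdist hA hadj he hf
  intro e f v he hf hve hvf
  by_cases heM : e ∈ M
  · exact extendColouring_ne_of_mem_of_notMem hMM' hφ hdist hA heM hf hve hvf
  · exact extendColouring_ne_of_mem_sdiff_of_notMem hMM' hM' hφ (mem_sdiff.2 ⟨he, heM⟩) hf
      hve hvf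

end Multigraph

theorem extension_from_local_alt_sets_general {V E : Type} [Fintype E]
    [DecidableEq E] (G : Multigraph V E) (Δ μ : ℕ)
    (hμ : ∀ s, G.multiplicity s ≤ μ)
    (M M' : Finset E) (hMM' : M ⊆ M') (hM' : G.IsMatching M')
    (hdist : ∀ e ∈ M, ∀ f ∈ M, e ≠ f → G.EdgeDistGe e f 9)
    (Φ : E → ℕ) (hΦ : ∀ e ∈ M, Φ e ∈ Finset.Icc 1 (Δ + μ))
    (φ : E → ℕ) (hφ : G.IsProperOff M' (Δ + μ - 1) φ)
    (hA : ∀ i ∈ Finset.Icc 1 (Δ + μ - 1), ∀ a ∈ G.AltSet M M' φ Φ i,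
      ∃ e ∈ M, Φ e = i ∧ G.EdgeDistLe a e 3) :
    ∃ c : E → ℕ, (∀ e, c e ∈ Finset.Icc 1 (Δ + μ)) ∧
      (∀ e f, G.EdgeAdj e f → c e ≠ c f) ∧
      ∀ e ∈ M, c e = Φ e := by
  rcases isEmpty_or_nonempty E with _ | ⟨⟨e₀⟩⟩
  · exact ⟨fun _ => 0, isEmptyElim, fun e => isEmptyElim e, fun e => isEmptyElim e⟩
  obtain ⟨k, hk⟩ : ∃ k, Δ + μ = k + 1 :=
    ⟨Δ + μ - 1, by have := (G.one_le_multiplicity e₀).trans (hμ _); omega⟩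
  simp only [hk, Nat.add_sub_cancel] at hΦ hφ hA ⊢
  exact ⟨G.extendColouring M M' φ Φ k, G.extendColouring_mem_Icc hMM' hΦ hφ.1,
    fun e f => Multigraph.extendColouring_ne hMM' hM' hφ hdist hA,
    fun e he => Multigraph.extendColouring_of_mem he⟩

/-- Concluding step of the main proof: if every edge of each alternating
structure `A_i` lies within distance `3` of an edge of `M` precoloured `i`,
then the precolouring extends to a proper `(Δ + μ)`-edge-colouring of `G`. -/
theorem extension_from_local_alt_sets {V E : Type} [Fintype V] [Fintype E] [DecidableEq V]
    [DecidableEq E] (G : Multigraph V E) (Δ μ : ℕ)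
    (hΔ : ∀ v, G.degree v ≤ Δ) (hμ : ∀ s, G.multiplicity s ≤ μ)
    (M M' : Finset E) (hMM' : M ⊆ M') (hM : G.IsMatching M) (hM' : G.IsMatching M')
    (hdist : ∀ e ∈ M, ∀ f ∈ M, e ≠ f → G.EdgeDistGe e f 9)
    (Φ : E → ℕ) (hΦ : ∀ e ∈ M, Φ e ∈ Finset.Icc 1 (Δ + μ))
    (φ : E → ℕ) (hφ : G.IsProperOff M' (Δ + μ - 1) φ)
    (hA : ∀ i ∈ Finset.Icc 1 (Δ + μ - 1), ∀ a ∈ G.AltSet M M' φ Φ i,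
      ∃ e ∈ M, Φ e = i ∧ G.EdgeDistLe a e 3) :
    ∃ c : E → ℕ, (∀ e, c e ∈ Finset.Icc 1 (Δ + μ)) ∧
      (∀ e f, G.EdgeAdj e f → c e ≠ c f) ∧
      ∀ e ∈ M, c e = Φ e :=
  extension_from_local_alt_sets_general G Δ μ hμ M M' hMM' hM' hdist Φ hΦ φ hφ hA
end

section
/- Let G be a multigraph, M a matching with edges pairwise at distance at least 5, Φ a precolouring of M, M′ ⊇ M a matching, and φ a proper (Δ + μ − 1)-edge-colouring of G \ M′. Suppose (M′, φ) is modified by a Vizing fan shift pivoting at the endpoint w₂ of a path e, e₁, e₂ certifying that e ∈ M is bad (so e₂ leaves M′ and some new edge f_p incident to w₂ enters M′, where f_p is not incident to any edge of M′). Then any edge of M that is bad with respect to the new pair but not the old is within distance 4 of e; in particular, under the distance-5 condition on M, no new bad edge is created. -/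
open Finset

/-!
A fan shift at `w₂` changes the matching and the colouring only at edges through `w₂`, so any
new certificate `e', e₁', e₂'` of badness passes within distance `2` of `w₂`, while `w₂` is
within distance `2` of `e` along `e₂, e₁`. Hence a newly bad edge of `M` lies within distance `4`
of `e`, and under the distance-`5` condition that edge can only be `e` itself, which was
already bad.
-/

namespace Multigraph

variable {V E : Type} (G : Multigraph V E)

theorem edist_le_one_of_mem_ends [DecidableEq V] {g : E} {u v : V} (hu : u ∈ G.ends g)
    (hv : v ∈ G.ends g) : G.toSimple.edist u v ≤ 1 := by
  refine SimpleGraph.edist_le_one_iff_adj_or_eq.mpr ?_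
  by_cases huv : u = v
  · exact .inr huv
  · exact .inl ⟨huv, g, (Sym2.mem_and_mem_iff huv).mp ⟨hu, hv⟩⟩

theorem edgeDistLe_of_edist_le {e f : E} {u v : V} {d : ℕ} (hu : u ∈ G.ends e)
    (hv : v ∈ G.ends f) (h : G.toSimple.edist u v ≤ d) : G.EdgeDistLe e f d := by
  obtain ⟨p, hp⟩ :=
    SimpleGraph.exists_walk_of_edist_ne_top (ne_top_of_le_ne_top (ENat.natCast_ne_top d) h)
  exact ⟨u, v, hu, hv, p, by exact_mod_cast hp ▸ h⟩

theorem exists_mem_ends_edist_le_two [DecidableEq V] {e e₁ e₂ : E} {w : V}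
    (h₁ : G.EdgeAdj e e₁) (h₂ : G.EdgeAdj e₁ e₂) (hw : w ∈ G.ends e₂) :
    ∃ b ∈ G.ends e, G.toSimple.edist w b ≤ 2 := by
  obtain ⟨-, b, hb, hb₁⟩ := h₁
  obtain ⟨-, a, ha₁, ha₂⟩ := h₂
  refine ⟨b, hb, ?_⟩
  calc G.toSimple.edist w b ≤ G.toSimple.edist w a + G.toSimple.edist a b :=
        SimpleGraph.edist_triangle
    _ ≤ 1 + 1 :=
        add_le_add (G.edist_le_one_of_mem_ends hw ha₂) (G.edist_le_one_of_mem_ends ha₁ hb₁)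
    _ = 2 := by norm_num

variable {G}

theorem IsBadEdge.of_exchange [DecidableEq V] [DecidableEq E] {M M' : Finset E}
    {Φ φ φ' : E → ℕ} {e₂ fp e' : E} {w : V}
    (he₂ : w ∈ G.ends e₂) (hfp : w ∈ G.ends fp) (hagree : ∀ g, w ∉ G.ends g → φ' g = φ g)
    (hbad : G.IsBadEdge M (insert fp (M'.erase e₂)) Φ φ' e') :
    G.IsBadEdge M M' Φ φ e' ∨ ∃ u ∈ G.ends e', G.toSimple.edist u w ≤ 2 := by
  obtain ⟨he', e₁', e₂', ⟨hne, u, hu, hu₁⟩, h₁₂, he₁', hcol, he₂'⟩ := hbad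
  by_cases hw : w ∈ G.ends e₁'
  · exact .inr ⟨u, hu, (G.edist_le_one_of_mem_ends hu₁ hw).trans (by norm_num)⟩
  by_cases hfp' : e₂' = fp
  · subst hfp'
    obtain ⟨-, v, hv₁, hv⟩ := h₁₂
    refine .inr ⟨u, hu, ?_⟩
    calc G.toSimple.edist u w ≤ G.toSimple.edist u v + G.toSimple.edist v w :=
          SimpleGraph.edist_triangle
      _ ≤ 1 + 1 := add_le_add (G.edist_le_one_of_mem_ends hu₁ hv₁)
          (G.edist_le_one_of_mem_ends hv hfp)
      _ = 2 := by norm_num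
  have hne₂ : e₁' ≠ e₂ := by rintro rfl; exact hw he₂
  refine .inl ⟨he', e₁', e₂', ⟨hne, u, hu, hu₁⟩, h₁₂, ?_, hagree e₁' hw ▸ hcol, ?_⟩
  · exact fun h => he₁' (mem_insert_of_mem (mem_erase.mpr ⟨hne₂, h⟩))
  · obtain ⟨h, hM⟩ := mem_sdiff.mp he₂'
    exact mem_sdiff.mpr ⟨mem_of_mem_erase ((mem_insert.mp h).resolve_left hfp'), hM⟩

end Multigraph

theorem no_new_bad_edges_general {V E : Type} [DecidableEq V] [DecidableEq E] (G : Multigraph V E)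
    (M M' : Finset E)
    (hdist : ∀ e ∈ M, ∀ f ∈ M, e ≠ f → G.EdgeDistGe e f 5)
    (Φ : E → ℕ) (φ : E → ℕ)
    (e e₁ e₂ : E) (he : e ∈ M)
    (hcert : G.EdgeAdj e e₁ ∧ G.EdgeAdj e₁ e₂ ∧ e₁ ∉ M' ∧ φ e₁ = Φ e ∧ e₂ ∈ M' \ M)
    (w₂ : V) (hw₂ : w₂ ∈ G.ends e₂ ∧ w₂ ∉ G.ends e₁)
    (fp : E) (hfp : w₂ ∈ G.ends fp)
    (φ' : E → ℕ)
    (hagree : ∀ g, w₂ ∉ G.ends g → φ' g = φ g) :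
    (∀ e' ∈ M, G.IsBadEdge M (insert fp (M'.erase e₂)) Φ φ' e' →
        ¬ G.IsBadEdge M M' Φ φ e' → G.EdgeDistLe e' e 4) ∧
      ∀ e' ∈ M, G.IsBadEdge M (insert fp (M'.erase e₂)) Φ φ' e' →
        G.IsBadEdge M M' Φ φ e' := by
  have local_damage : ∀ e' ∈ M, G.IsBadEdge M (insert fp (M'.erase e₂)) Φ φ' e' →
      ¬ G.IsBadEdge M M' Φ φ e' → G.EdgeDistLe e' e 4 := by
    intro e' _ hbad hnot
    obtain ⟨u, hu, huw⟩ := (hbad.of_exchange hw₂.1 hfp hagree).resolve_left hnot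
    obtain ⟨b, hb, hwb⟩ := G.exists_mem_ends_edist_le_two hcert.1 hcert.2.1 hw₂.1
    refine G.edgeDistLe_of_edist_le hu hb ?_
    calc G.toSimple.edist u b ≤ G.toSimple.edist u w₂ + G.toSimple.edist w₂ b :=
          SimpleGraph.edist_triangle
      _ ≤ 2 + 2 := add_le_add huw hwb
      _ = 4 := by norm_num
  refine ⟨local_damage, fun e' he' hbad => ?_⟩
  by_contra hnot
  obtain rfl | hne := eq_or_ne e' e
  · exact hnot ⟨he, e₁, e₂, hcert⟩
  · obtain ⟨u, v, hu, hv, p, hp⟩ := local_damage e' he' hbad hnot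
    have := hdist e' he' e he hne u v hu hv p
    omega

/-- Locality of damage in the C5-free proof: after a Vizing fan shift at the
endpoint `w₂` of a path `e, e₁, e₂` certifying that `e ∈ M` is bad (removing
`e₂` from `M'` and inserting a new edge `fp` at `w₂`), any newly bad edge of
`M` is within distance `4` of `e`; in particular, with the edges of `M`
pairwise at distance at least `5`, no new bad edge is created. -/
theorem no_new_bad_edges {V E : Type} [Fintype V] [Fintype E] [DecidableEq V]
    [DecidableEq E] (G : Multigraph V E) (Δ μ : ℕ)
    (hΔ : ∀ v, G.degree v ≤ Δ) (hμ : ∀ s, G.multiplicity s ≤ μ)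
    (M M' : Finset E) (hMM' : M ⊆ M') (hM : G.IsMatching M) (hM' : G.IsMatching M')
    (hdist : ∀ e ∈ M, ∀ f ∈ M, e ≠ f → G.EdgeDistGe e f 5)
    (Φ : E → ℕ) (φ : E → ℕ) (hφ : G.IsProperOff M' (Δ + μ - 1) φ)
    (e e₁ e₂ : E) (he : e ∈ M)
    (hcert : G.EdgeAdj e e₁ ∧ G.EdgeAdj e₁ e₂ ∧ e₁ ∉ M' ∧ φ e₁ = Φ e ∧ e₂ ∈ M' \ M)
    (w₂ : V) (hw₂ : w₂ ∈ G.ends e₂ ∧ w₂ ∉ G.ends e₁)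
    (fp : E) (hfp : w₂ ∈ G.ends fp) (hfpM' : fp ∉ M')
    (hfpfree : ∀ g ∈ M', g ≠ e₂ → ¬ G.EdgeAdj fp g)
    (φ' : E → ℕ) (hφ' : G.IsProperOff (insert fp (M'.erase e₂)) (Δ + μ - 1) φ')
    (hagree : ∀ g, w₂ ∉ G.ends g → φ' g = φ g) :
    (∀ e' ∈ M, G.IsBadEdge M (insert fp (M'.erase e₂)) Φ φ' e' →
        ¬ G.IsBadEdge M M' Φ φ e' → G.EdgeDistLe e' e 4) ∧
      ∀ e' ∈ M, G.IsBadEdge M (insert fp (M'.erase e₂)) Φ φ' e' →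
        G.IsBadEdge M M' Φ φ e' :=
  no_new_bad_edges_general G M M' hdist Φ φ e e₁ e₂ he hcert w₂ hw₂ fp hfp φ' hagree
end
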